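/- arXiv:2107.03612 — 8 statements merged into one kernel-verified Lean document; each statement's English description precedes it below -/
import Mathlib

section
/- Let k be an algebraically closed field with char k ≠ 2, and let g, g', h, h' ∈ k with h ≠ 0 and h' ≠ 0. Then there exists a graded isomorphism T(g,h) ≅ T(g',h') if and only if g²·h' = (g')²·h. -/
noncomputable section

/-- The free algebra on three generators `x, y, z` (indexed by `Fin 3`). -/
abbrev F3 (k : Type) [Field k] : Type := FreeAlgebra k (Fin 3)

noncomputable def X (k : Type) [Field k] : F3 k := FreeAlgebra.ι k 0
noncomputable def Y (k : Type) [Field k] : F3 k := FreeAlgebra.ι k 1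
noncomputable def Z (k : Type) [Field k] : F3 k := FreeAlgebra.ι k 2

/-- The quotient of the free algebra on `x, y, z` by the two-sided ideal
generated by the set `rels`. -/
abbrev quotAlg (k : Type) [Field k] (rels : Set (F3 k)) : Type :=
  RingQuot (fun a b : F3 k => a ∈ rels ∧ b = 0)

/-- The image of the `i`-th generator in the quotient algebra. -/
noncomputable def gen (k : Type) [Field k] (rels : Set (F3 k)) (i : Fin 3) :
    quotAlg k rels :=
  RingQuot.mkAlgHom k (fun a b : F3 k => a ∈ rels ∧ b = 0) (FreeAlgebra.ι k i)

/-- The `k`-linear span of the images of the generators in the quotient. -/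
noncomputable def genSpan (k : Type) [Field k] (rels : Set (F3 k)) :
    Submodule k (quotAlg k rels) :=
  Submodule.span k (Set.range (gen k rels))

/-- There is a graded isomorphism between the two quotient algebras:
a `k`-algebra isomorphism carrying the span of the generators onto the
span of the generators. -/
def GradedIso (k : Type) [Field k] (r1 r2 : Set (F3 k)) : Prop :=
  ∃ φ : quotAlg k r1 ≃ₐ[k] quotAlg k r2,
    Submodule.map φ.toLinearMap (genSpan k r1) = genSpan k r2

/-- The algebra `T(g,h) = k⟨x,y,z⟩/⟨xy − yx, zy + yz − x² − g·y², z² + h·y²⟩`. -/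
noncomputable def Trel (k : Type) [Field k] (g h : k) : Set (F3 k) :=
  {X k * Y k - Y k * X k,
   Z k * Y k + Y k * Z k - X k ^ 2 - g • Y k ^ 2,
   Z k ^ 2 + h • Y k ^ 2}


/-! A graded isomorphism `T(g,h) ≅ T(g',h')` is given on generators by an invertible `3 × 3`
matrix `A`. To read off the constraints on `A`, let `T(g',h')` act on the truncation in degrees
`≤ 2` of `T(g',h')/(yz, zx)`, where products of linear forms are an explicit bilinear map into the
four-dimensional degree-two part. Comparing coefficients forces `A = diag(a, b, c)` with
`g'c = gb` and `hb² = h'c²`, whence `g²h' = g'²h`. Conversely, if `g²h' = g'²h`, pick `s` with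
`gs = g'`, `hs² = h'` and `α² = s` (square roots exist as `k` is algebraically closed); then
`x ↦ αx, y ↦ sy, z ↦ z` is a graded isomorphism. -/

namespace TAlgebra

variable {k : Type} [Field k]

section Quotient

variable {rels r1 r2 : Set (F3 k)}

theorem mkAlgHom_eq_zero_of_mem {r : F3 k} (hr : r ∈ rels) :
    RingQuot.mkAlgHom k (fun a b : F3 k => a ∈ rels ∧ b = 0) r = 0 := by
  simpa using RingQuot.mkAlgHom_rel k (s := fun a b : F3 k => a ∈ rels ∧ b = 0) ⟨hr, rfl⟩

theorem algHom_ext {A : Type*} [Semiring A] [Algebra k A] {f f' : quotAlg k rels →ₐ[k] A}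
    (hf : ∀ i, f (gen k rels i) = f' (gen k rels i)) : f = f' :=
  RingQuot.ringQuot_ext' _ _ _ (FreeAlgebra.hom_ext (funext hf))

variable (rels) in
def genComb : (Fin 3 → k) →ₗ[k] quotAlg k rels :=
  Fintype.linearCombination k (gen k rels)

theorem map_genSpan_of_gen_eq_smul (f : quotAlg k r1 →ₗ[k] quotAlg k r2) (d : Fin 3 → k)
    (hd : ∀ i, d i ≠ 0) (hf : ∀ i, f (gen k r1 i) = d i • gen k r2 i) :
    (genSpan k r1).map f = genSpan k r2 := by
  rw [genSpan, genSpan, Submodule.map_span, ← Set.range_comp, Submodule.span_range_eq_iSup,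
    Submodule.span_range_eq_iSup]
  simp_rw [Function.comp_apply, hf, Submodule.span_singleton_smul_eq (hd _).isUnit]

theorem exists_matrix_of_map_genSpan (φ : quotAlg k r1 ≃ₐ[k] quotAlg k r2)
    (hφ : (genSpan k r1).map φ.toLinearMap = genSpan k r2)
    (hgen : LinearIndependent k (gen k r1)) :
    ∃ A : Matrix (Fin 3) (Fin 3) k, A.det ≠ 0 ∧ ∀ i, φ (gen k r1 i) = genComb r2 (A i) := by
  have hmem (i : Fin 3) : φ (gen k r1 i) ∈ genSpan k r2 :=
    hφ ▸ Submodule.mem_map_of_mem (Submodule.subset_span ⟨i, rfl⟩)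
  choose A hA using fun i => (Submodule.mem_span_range_iff_exists_fun k).1 (hmem i)
  have hcomp : genComb r2 ∘ A = φ ∘ gen k r1 :=
    funext fun i => by simp [genComb, Fintype.linearCombination_apply, hA]
  have hind : LinearIndependent k (genComb r2 ∘ A) := by
    rw [hcomp]
    exact hgen.map' φ.toLinearMap (LinearMap.ker_eq_bot.2 φ.injective)
  refine ⟨A, ?_, fun i => (congrFun hcomp i).symm⟩
  exact (Matrix.isUnit_iff_isUnit_det A).1
    (Matrix.linearIndependent_rows_iff_isUnit.1 hind.of_comp) |>.ne_zero

end Quotient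

def SatisfiesT {A : Type*} [Ring A] [Algebra k A] (g h : k) (x y z : A) : Prop :=
  x * y = y * x ∧ z * y + y * z = x ^ 2 + g • y ^ 2 ∧ z ^ 2 + h • y ^ 2 = 0

section SatisfiesT

variable {A B : Type*} [Ring A] [Algebra k A] [Ring B] [Algebra k B] {g h : k} {x y z : A}

theorem SatisfiesT.map {F : Type*} [FunLike F A B] [AlgHomClass F k A B]
    (hs : SatisfiesT g h x y z) (f : F) : SatisfiesT g h (f x) (f y) (f z) := by
  obtain ⟨hxy, hzy, hz⟩ := hs
  exact ⟨by simpa using congrArg f hxy, by simpa using congrArg f hzy,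
    by simpa using congrArg f hz⟩

theorem satisfiesT_gen (g h : k) :
    SatisfiesT g h (gen k (Trel k g h) 0) (gen k (Trel k g h) 1) (gen k (Trel k g h) 2) := by
  have hxy := mkAlgHom_eq_zero_of_mem (show X k * Y k - Y k * X k ∈ Trel k g h by simp [Trel])
  have hzy := mkAlgHom_eq_zero_of_mem
    (show Z k * Y k + Y k * Z k - X k ^ 2 - g • Y k ^ 2 ∈ Trel k g h by simp [Trel])
  have hz := mkAlgHom_eq_zero_of_mem (show Z k ^ 2 + h • Y k ^ 2 ∈ Trel k g h by simp [Trel])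
  simp only [map_sub, map_add, map_mul, map_pow, map_smul] at hxy hzy hz
  exact ⟨sub_eq_zero.1 hxy, by rwa [sub_sub, sub_eq_zero] at hzy, hz⟩

theorem SatisfiesT.lift_eq_zero (hs : SatisfiesT g h x y z) :
    ∀ r ∈ Trel k g h, FreeAlgebra.lift k ![x, y, z] r = 0 := by
  obtain ⟨hxy, hzy, hz⟩ := hs
  rintro r (rfl | rfl | rfl) <;> simp [X, Y, Z, hxy, hz, hzy]

def liftT (hs : SatisfiesT g h x y z) : quotAlg k (Trel k g h) →ₐ[k] A :=
  RingQuot.liftAlgHom k ⟨FreeAlgebra.lift k ![x, y, z], by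
    rintro a b ⟨ha, rfl⟩
    rw [map_zero]
    exact hs.lift_eq_zero a ha⟩

@[simp]
theorem liftT_gen (hs : SatisfiesT g h x y z) (i : Fin 3) :
    liftT hs (gen k (Trel k g h) i) = ![x, y, z] i := by
  simp [liftT, gen]

end SatisfiesT

section Scaling

variable {g h g' h' α β γ : k}

theorem satisfiesT_smul_gen (hα : α ^ 2 = β * γ) (hβ : g * β = g' * γ)
    (hγ : h * β ^ 2 = h' * γ ^ 2) :
    SatisfiesT g h (α • gen k (Trel k g' h') 0) (β • gen k (Trel k g' h') 1)
      (γ • gen k (Trel k g' h') 2) := by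
  obtain ⟨hxy, hzy, hz⟩ := satisfiesT_gen g' h'
  set x := gen k (Trel k g' h') 0
  set y := gen k (Trel k g' h') 1
  set z := gen k (Trel k g' h') 2
  refine ⟨by rw [smul_mul_smul_comm, smul_mul_smul_comm, hxy, mul_comm], ?_, ?_⟩
  · calc (γ • z) * (β • y) + (β • y) * (γ • z) = (β * γ) • (z * y + y * z) := by
          rw [smul_mul_smul_comm, smul_mul_smul_comm, smul_add, mul_comm γ]
      _ = (α • x) ^ 2 + g • (β • y) ^ 2 := by
          rw [hzy, smul_pow, smul_pow]
          linear_combination (norm := module) (-hα) • x ^ 2 - (β • hβ) • y ^ 2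
  · rw [smul_pow, smul_pow]
    linear_combination (norm := module) γ ^ 2 • hz + hγ • y ^ 2

def scaleHom (hα : α ^ 2 = β * γ) (hβ : g * β = g' * γ) (hγ : h * β ^ 2 = h' * γ ^ 2) :
    quotAlg k (Trel k g h) →ₐ[k] quotAlg k (Trel k g' h') :=
  liftT (satisfiesT_smul_gen hα hβ hγ)

theorem scaleHom_gen (hα : α ^ 2 = β * γ) (hβ : g * β = g' * γ)
    (hγ : h * β ^ 2 = h' * γ ^ 2) (i : Fin 3) :
    scaleHom hα hβ hγ (gen k (Trel k g h) i) = ![α, β, γ] i • gen k (Trel k g' h') i := by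
  fin_cases i <;> simp [scaleHom]

theorem gradedIso_of_scaling (hα0 : α ≠ 0) (hβ0 : β ≠ 0) (hγ0 : γ ≠ 0)
    (hα : α ^ 2 = β * γ) (hβ : g * β = g' * γ) (hγ : h * β ^ 2 = h' * γ ^ 2) :
    GradedIso k (Trel k g h) (Trel k g' h') := by
  have hα' : α⁻¹ ^ 2 = β⁻¹ * γ⁻¹ := by rw [inv_pow, hα, mul_inv]
  have hβ' : g' * β⁻¹ = g * γ⁻¹ := by
    field_simp
    linear_combination -hβ
  have hγ' : h' * β⁻¹ ^ 2 = h * γ⁻¹ ^ 2 := by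
    field_simp
    linear_combination -hγ
  set f := scaleHom hα hβ hγ
  set f' := scaleHom hα' hβ' hγ'
  have hd : ∀ i : Fin 3, ![α, β, γ] i ≠ 0 := by
    intro i; fin_cases i <;> assumption
  have hinv : ∀ i : Fin 3, ![α⁻¹, β⁻¹, γ⁻¹] i = (![α, β, γ] i)⁻¹ := by
    intro i; fin_cases i <;> rfl
  refine ⟨AlgEquiv.ofAlgHom f f' ?_ ?_, map_genSpan_of_gen_eq_smul _ _ hd (scaleHom_gen _ _ _)⟩
  all_goals
    refine algHom_ext fun i => ?_
    simp only [AlgHom.comp_apply, AlgHom.id_apply, f, f', scaleHom_gen, map_smul, smul_smul, hinv,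
      inv_mul_cancel₀ (hd i), mul_inv_cancel₀ (hd i), one_smul]

theorem exists_scaling [IsAlgClosed k] (hh : h ≠ 0) (hh' : h' ≠ 0)
    (hcond : g ^ 2 * h' = g' ^ 2 * h) :
    ∃ α β γ : k, α ≠ 0 ∧ β ≠ 0 ∧ γ ≠ 0 ∧
      α ^ 2 = β * γ ∧ g * β = g' * γ ∧ h * β ^ 2 = h' * γ ^ 2 := by
  obtain ⟨s, hgs, hhs⟩ : ∃ s : k, g * s = g' ∧ h * s ^ 2 = h' := by
    by_cases hg : g = 0
    · obtain ⟨s, hs⟩ := IsAlgClosed.exists_pow_nat_eq (h' / h) two_pos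
      have hg' : g' = 0 := by simpa [hg, hh, eq_comm (a := (0 : k))] using hcond
      exact ⟨s, by simp [hg, hg'], by rw [hs, mul_div_cancel₀ _ hh]⟩
    · refine ⟨g' / g, mul_div_cancel₀ _ hg, ?_⟩
      field_simp
      linear_combination -hcond
  have hs0 : s ≠ 0 := by rintro rfl; simp [eq_comm, hh'] at hhs
  obtain ⟨α, hα⟩ := IsAlgClosed.exists_pow_nat_eq s two_pos
  exact ⟨α, s, 1, by rintro rfl; simp [eq_comm, hs0] at hα, hs0, one_ne_zero,
    by rw [hα, mul_one], by rw [hgs, mul_one], by rw [hhs, one_pow, mul_one]⟩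

end Scaling

section Truncation

/- `TruncModule k` is the part of degree `≤ 2` of `T(g,h)/(yz, zx)`, with degree-two basis
`x², xy, xz, y²`; there `zy = x² + g y²` and `z² = -h y²`, which gives `quadMul`. -/

variable (k) in
abbrev TruncModule : Type := k × (Fin 3 → k) × (Fin 4 → k)

def quadMul (g h : k) : (Fin 3 → k) →ₗ[k] (Fin 3 → k) →ₗ[k] (Fin 4 → k) :=
  LinearMap.mk₂ k (fun u v => ![u 0 * v 0 + u 2 * v 1, u 1 * v 0 + u 0 * v 1, u 0 * v 2,
      (u 1 + g * u 2) * v 1 - h * u 2 * v 2])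
    (by intros; ext i; fin_cases i <;> simp <;> ring)
    (by intros; ext i; fin_cases i <;> simp <;> ring)
    (by intros; ext i; fin_cases i <;> simp <;> ring)
    (by intros; ext i; fin_cases i <;> simp <;> ring)

variable (k) in
def ofDegTwo : (Fin 4 → k) →ₗ[k] Module.End k (TruncModule k) :=
  LinearMap.mk₂ k (fun w p => (0, 0, p.1 • w))
    (by intros; simp) (by intros; simp [smul_smul, mul_comm])
    (by intros; simp [add_smul]) (by intros; simp [smul_smul])

/-- Left multiplication by the linear form `u`. -/
def truncMul (g h : k) : (Fin 3 → k) →ₗ[k] Module.End k (TruncModule k) :=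
  LinearMap.mk₂ k (fun u p => (0, p.1 • u, quadMul g h u p.2.1))
    (by intros; simp) (by intros; simp [smul_smul, mul_comm])
    (by intros; simp [add_smul]) (by intros; simp [smul_smul])

theorem ofDegTwo_injective : Function.Injective (ofDegTwo k) := by
  intro w w' hw
  simpa [ofDegTwo] using LinearMap.congr_fun hw (1, 0, 0)

theorem truncMul_mul_truncMul (g h : k) (u v : Fin 3 → k) :
    truncMul g h u * truncMul g h v = ofDegTwo k (quadMul g h u v) := by
  refine LinearMap.ext fun p => ?_
  simp [truncMul, ofDegTwo]

theorem satisfiesT_truncMul_iff (g h g' h' : k) (a b c : Fin 3 → k) :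
    SatisfiesT g h (truncMul g' h' a) (truncMul g' h' b) (truncMul g' h' c) ↔
      quadMul g' h' a b = quadMul g' h' b a ∧
      quadMul g' h' c b + quadMul g' h' b c = quadMul g' h' a a + g • quadMul g' h' b b ∧
      quadMul g' h' c c + h • quadMul g' h' b b = 0 := by
  simp only [SatisfiesT, pow_two, truncMul_mul_truncMul, ← map_add, ← map_smul,
    ofDegTwo_injective.eq_iff, LinearMap.map_eq_zero_iff _ ofDegTwo_injective]

theorem satisfiesT_truncMul_single (g h : k) :
    SatisfiesT g h (truncMul g h (Pi.single 0 1)) (truncMul g h (Pi.single 1 1))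
      (truncMul g h (Pi.single 2 1)) := by
  refine (satisfiesT_truncMul_iff g h g h _ _ _).2 ⟨?_, ?_, ?_⟩ <;>
    ext i <;> fin_cases i <;> simp [quadMul]

def truncRep (g h : k) : quotAlg k (Trel k g h) →ₐ[k] Module.End k (TruncModule k) :=
  liftT (satisfiesT_truncMul_single g h)

theorem truncRep_genComb (g h : k) (u : Fin 3 → k) :
    truncRep g h (genComb (Trel k g h) u) = truncMul g h u := by
  suffices (truncRep g h).toLinearMap ∘ₗ genComb (Trel k g h) = truncMul g h from
    LinearMap.congr_fun this u
  ext i : 2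
  fin_cases i <;> simp [truncRep, genComb]

theorem linearIndependent_gen (g h : k) : LinearIndependent k (gen k (Trel k g h)) := by
  refine linearIndependent_iff_injective_fintypeLinearCombination.2 fun u v huv => ?_
  change genComb _ u = genComb _ v at huv
  simpa [truncRep_genComb, truncMul] using
    LinearMap.congr_fun (congrArg (truncRep g h) huv) (1, 0, 0)

end Truncation

section Coefficients

variable {g h g' h' : k} {A : Matrix (Fin 3) (Fin 3) k}

theorem entries_two_eq_zero (hdet : A.det ≠ 0)
    (hxy : quadMul g' h' (A 0) (A 1) = quadMul g' h' (A 1) (A 0)) : A 0 2 = 0 ∧ A 1 2 = 0 := by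
  have hx2 := congrFun hxy 0
  have hxz := congrFun hxy 2
  simp only [quadMul, LinearMap.mk₂_apply, Matrix.cons_val_zero, Matrix.cons_val] at hx2 hxz
  rw [Matrix.det_fin_three] at hdet
  have ha : A 0 2 = 0 := by
    refine pow_eq_zero_iff two_ne_zero |>.1 ((mul_eq_zero.1 ?_).resolve_right hdet)
    linear_combination (A 0 2 * A 2 2 * A 0 0 - A 0 2 ^ 2 * A 2 0) * hx2
      - (A 0 2 ^ 2 * A 2 1 - A 0 2 * A 2 2 * A 0 1) * hxz
  refine ⟨ha, ?_⟩
  by_contra hb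
  have h01 : A 0 1 = 0 :=
    (mul_eq_zero.1 (by linear_combination -hx2 + A 1 1 * ha : A 1 2 * A 0 1 = 0)).resolve_left hb
  have h00 : A 0 0 = 0 :=
    (mul_eq_zero.1 (by linear_combination hxz + A 1 0 * ha : A 0 0 * A 1 2 = 0)).resolve_right hb
  exact hdet (by rw [ha, h00, h01]; ring)

theorem sq_mul_eq_of_satisfiesT (h2 : (2 : k) ≠ 0) (hdet : A.det ≠ 0)
    (hs : SatisfiesT g h (truncMul g' h' (A 0)) (truncMul g' h' (A 1)) (truncMul g' h' (A 2))) :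
    g ^ 2 * h' = g' ^ 2 * h := by
  obtain ⟨hxy, hzy, hz⟩ := (satisfiesT_truncMul_iff ..).1 hs
  obtain ⟨ha2, hb2⟩ := entries_two_eq_zero hdet hxy
  have hzy_xy := congrFun hzy 1
  have hzy_xz := congrFun hzy 2
  have hzy_yy := congrFun hzy 3
  have hz_xx := congrFun hz 0
  have hz_xz := congrFun hz 2
  have hz_yy := congrFun hz 3
  simp only [quadMul, LinearMap.mk₂_apply, Pi.add_apply, Pi.zero_apply, Matrix.smul_cons,
    smul_eq_mul, Matrix.smul_empty, Matrix.cons_val_zero, Matrix.cons_val_one, Matrix.cons_val,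
    ha2, hb2, mul_zero, zero_mul, add_zero, zero_add, sub_zero, mul_eq_zero]
    at hzy_xy hzy_xz hzy_yy hz_xx hz_xz hz_yy
  have hdet' : A 2 2 * (A 0 0 * A 1 1 - A 0 1 * A 1 0) ≠ 0 := by
    rw [Matrix.det_fin_three, ha2, hb2] at hdet
    convert hdet using 1
    ring
  obtain ⟨hc2, hab⟩ := mul_ne_zero_iff.1 hdet'
  have hb0 : A 1 0 = 0 := hzy_xz.resolve_right hc2
  have hc0 : A 2 0 = 0 := hz_xz.resolve_right hc2
  obtain ⟨ha0, hb1⟩ : A 0 0 ≠ 0 ∧ A 1 1 ≠ 0 := mul_ne_zero_iff.1 (by simpa [hb0] using hab)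
  have hc1 : A 2 1 = 0 :=
    (mul_eq_zero.1 (by linear_combination hz_xx - A 2 0 * hc0 - h * A 1 0 * hb0 :
      A 2 2 * A 2 1 = 0)).resolve_left hc2
  have ha1 : A 0 1 = 0 := by
    have : 2 * A 0 0 * A 0 1 = 0 := by
      linear_combination -hzy_xy + (2 * A 2 1 - 2 * g * A 1 1) * hb0 + 2 * A 1 1 * hc0
    simpa [h2, ha0] using this
  have hg : g' * A 2 2 = g * A 1 1 :=
    mul_left_cancel₀ hb1 (by linear_combination hzy_yy - 2 * A 1 1 * hc1 + A 0 1 * ha1)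
  have hh : h * A 1 1 ^ 2 = h' * A 2 2 ^ 2 := by
    linear_combination hz_yy - A 2 1 * hc1 - g' * A 2 2 * hc1
  refine mul_right_cancel₀ (pow_ne_zero 2 hc2) ?_
  linear_combination (-(g ^ 2)) * hh - h * (g' * A 2 2 + g * A 1 1) * hg

end Coefficients

end TAlgebra

open TAlgebra in
theorem stmt1 (k : Type) [Field k] [IsAlgClosed k] (hchar : ringChar k ≠ 2)
    (g g' h h' : k) (hh : h ≠ 0) (hh' : h' ≠ 0) :
    GradedIso k (Trel k g h) (Trel k g' h') ↔ g ^ 2 * h' = g' ^ 2 * h := by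
  constructor
  · rintro ⟨φ, hφ⟩
    obtain ⟨A, hdet, hA⟩ := exists_matrix_of_map_genSpan φ hφ (linearIndependent_gen g h)
    have hs := ((satisfiesT_gen g h).map φ).map (truncRep g' h')
    simp only [hA, truncRep_genComb] at hs
    exact sq_mul_eq_of_satisfiesT (Ring.two_ne_zero hchar) hdet hs
  · intro hcond
    obtain ⟨α, β, γ, hα0, hβ0, hγ0, hα, hβ, hγ⟩ := exists_scaling hh hh' hcond
    exact gradedIso_of_scaling hα0 hβ0 hγ0 hα hβ hγ
end
end

section
/- Let k be an algebraically closed field with char k ≠ 2, and let a, b, c ∈ k with a ≠ 1. If b² − 4ac + 4c ≠ 0, then the algebra V(a,b,c) = k⟨x,y,z⟩/⟨xy − yx, zx − a·x² − b·xy − c·y² + xz − z², zy − 2xy + yz⟩ is graded-isomorphic to U' = k⟨x,y,z⟩/⟨xy − zx, yx − xz, x² + y² + z²⟩. -/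
noncomputable section

/-- Relations of `V(a,b,c) = k⟨x,y,z⟩/⟨xy − yx, zx − a·x² − b·xy − c·y² + xz − z², zy − 2xy + yz⟩`. -/
noncomputable def Vrel (k : Type) [Field k] (a b c : k) : Set (F3 k) :=
  {X k * Y k - Y k * X k,
   Z k * X k - a • X k ^ 2 - b • (X k * Y k) - c • Y k ^ 2 + X k * Z k - Z k ^ 2,
   Z k * Y k - 2 * (X k * Y k) + Y k * Z k}


/-- Relations of `U' = k⟨x,y,z⟩/⟨xy − zx, yx − xz, x² + y² + z²⟩`. -/
noncomputable def U'rel (k : Type) [Field k] : Set (F3 k) :=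
  {X k * Y k - Z k * X k, Y k * X k - X k * Z k, X k ^ 2 + Y k ^ 2 + Z k ^ 2}

/-!
Both algebras are brought to the normal form
`N = k⟨p, q, w⟩ / (pq − qp, wq + qw, p² + 2q² + w²)` by linear changes of generators.
In `V(a,b,c)` the second relation reads `(z − x)² = (1 − a)x² − bxy − cy²`; completing the square,
`p = 4ρ²x + 2by`, `q = τy`, `w = 4ρ(z − x)` with `ρ² = a − 1` and `τ² = −2(b² − 4ac + 4c)`
satisfy the relations of `N`, and `τ ≠ 0` is where `b² − 4ac + 4c ≠ 0` enters.
In `U'` the generators `p = y + z`, `q = x`, `w = y − z` do the same, since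
`p² + w² = 2(y² + z²)`. A linear substitution of the generators that kills the relations of the
source, and whose inverse substitution kills those of the target, is a graded isomorphism.
-/

section LinearSubstitution

variable {k : Type} [Field k]

def quotLift {r : Set (F3 k)} {B : Type} [Semiring B] [Algebra k B]
    (f : F3 k →ₐ[k] B) (hf : ∀ p ∈ r, f p = 0) : quotAlg k r →ₐ[k] B :=
  RingQuot.liftAlgHom k ⟨f, by rintro p _ ⟨hp, rfl⟩; rw [hf p hp, map_zero]⟩

theorem quotLift_gen {r : Set (F3 k)} {B : Type} [Semiring B] [Algebra k B]
    (f : F3 k →ₐ[k] B) (hf : ∀ p ∈ r, f p = 0) (i : Fin 3) :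
    quotLift f hf (gen k r i) = f (FreeAlgebra.ι k i) :=
  RingQuot.liftAlgHom_mkAlgHom_apply k _ _ _

theorem quotAlg_algHom_ext {r : Set (F3 k)} {B : Type} [Semiring B] [Algebra k B]
    {f g : quotAlg k r →ₐ[k] B} (h : ∀ i, f (gen k r i) = g (gen k r i)) : f = g :=
  RingQuot.ringQuot_ext' _ _ _ <| FreeAlgebra.hom_ext <| funext h

theorem lift_gen_eq_zero_of_mem {r : Set (F3 k)} {p : F3 k} (hp : p ∈ r) :
    FreeAlgebra.lift k (gen k r) p = 0 := by
  have hmk : FreeAlgebra.lift k (gen k r) = RingQuot.mkAlgHom k _ :=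
    FreeAlgebra.hom_ext <| funext fun i => FreeAlgebra.lift_ι_apply _ _
  simpa [hmk] using RingQuot.mkAlgHom_rel k (s := fun a b : F3 k => a ∈ r ∧ b = 0) ⟨hp, rfl⟩

theorem lift_gen_X (r : Set (F3 k)) : FreeAlgebra.lift k (gen k r) (X k) = gen k r 0 :=
  FreeAlgebra.lift_ι_apply _ _

theorem lift_gen_Y (r : Set (F3 k)) : FreeAlgebra.lift k (gen k r) (Y k) = gen k r 1 :=
  FreeAlgebra.lift_ι_apply _ _

theorem lift_gen_Z (r : Set (F3 k)) : FreeAlgebra.lift k (gen k r) (Z k) = gen k r 2 :=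
  FreeAlgebra.lift_ι_apply _ _

theorem sum_smul_gen_mem_genSpan (r : Set (F3 k)) (v : Fin 3 → k) :
    ∑ j, v j • gen k r j ∈ genSpan k r :=
  Submodule.sum_mem _ fun j _ => Submodule.smul_mem _ _ (Submodule.subset_span ⟨j, rfl⟩)

def linearSubst (r : Set (F3 k)) (M : Matrix (Fin 3) (Fin 3) k) : F3 k →ₐ[k] quotAlg k r :=
  FreeAlgebra.lift k fun i => ∑ j, M i j • gen k r j

theorem linearSubst_ι (r : Set (F3 k)) (M : Matrix (Fin 3) (Fin 3) k) (i : Fin 3) :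
    linearSubst r M (FreeAlgebra.ι k i) = ∑ j, M i j • gen k r j :=
  FreeAlgebra.lift_ι_apply _ _

theorem linearSubst_X (r : Set (F3 k)) (M : Matrix (Fin 3) (Fin 3) k) :
    linearSubst r M (X k) = ∑ j, M 0 j • gen k r j :=
  linearSubst_ι r M 0

theorem linearSubst_Y (r : Set (F3 k)) (M : Matrix (Fin 3) (Fin 3) k) :
    linearSubst r M (Y k) = ∑ j, M 1 j • gen k r j :=
  linearSubst_ι r M 1

theorem linearSubst_Z (r : Set (F3 k)) (M : Matrix (Fin 3) (Fin 3) k) :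
    linearSubst r M (Z k) = ∑ j, M 2 j • gen k r j :=
  linearSubst_ι r M 2

def substHom {r₁ r₂ : Set (F3 k)} (M : Matrix (Fin 3) (Fin 3) k)
    (hM : ∀ p ∈ r₁, linearSubst r₂ M p = 0) : quotAlg k r₁ →ₐ[k] quotAlg k r₂ :=
  quotLift (linearSubst r₂ M) hM

theorem substHom_gen {r₁ r₂ : Set (F3 k)} (M : Matrix (Fin 3) (Fin 3) k)
    (hM : ∀ p ∈ r₁, linearSubst r₂ M p = 0) (i : Fin 3) :
    substHom M hM (gen k r₁ i) = ∑ j, M i j • gen k r₂ j := by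
  rw [substHom, quotLift_gen, linearSubst_ι]

theorem substHom_comp_substHom {r₁ r₂ : Set (F3 k)} {M N : Matrix (Fin 3) (Fin 3) k}
    (hM : ∀ p ∈ r₁, linearSubst r₂ M p = 0) (hN : ∀ p ∈ r₂, linearSubst r₁ N p = 0)
    (hMN : M * N = 1) : (substHom N hN).comp (substHom M hM) = AlgHom.id k _ := by
  refine quotAlg_algHom_ext fun i => ?_
  calc substHom N hN (substHom M hM (gen k r₁ i))
      = ∑ l, (M * N) i l • gen k r₁ l := by
        simp only [substHom_gen, map_sum, map_smul, Finset.smul_sum, smul_smul,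
          Matrix.mul_apply, Finset.sum_smul]
        exact Finset.sum_comm
    _ = gen k r₁ i := by simp [hMN, Matrix.one_apply]

theorem gradedIso_of_linearSubst {r₁ r₂ : Set (F3 k)} (M N : Matrix (Fin 3) (Fin 3) k)
    (hMN : M * N = 1) (hM : ∀ p ∈ r₁, linearSubst r₂ M p = 0)
    (hN : ∀ p ∈ r₂, linearSubst r₁ N p = 0) : GradedIso k r₁ r₂ := by
  have hNM : N * M = 1 := mul_eq_one_comm.mp hMN
  refine ⟨AlgEquiv.ofAlgHom (substHom M hM) (substHom N hN)
    (substHom_comp_substHom hN hM hNM) (substHom_comp_substHom hM hN hMN), le_antisymm ?_ ?_⟩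
  · rw [genSpan, Submodule.map_span, Submodule.span_le]
    rintro _ ⟨_, ⟨i, rfl⟩, rfl⟩
    exact (substHom_gen M hM i).symm ▸ sum_smul_gen_mem_genSpan r₂ _
  · rw [genSpan, Submodule.span_le]
    rintro _ ⟨i, rfl⟩
    refine ⟨substHom N hN (gen k r₂ i),
      (substHom_gen N hN i).symm ▸ sum_smul_gen_mem_genSpan r₁ _, ?_⟩
    exact AlgHom.congr_fun (substHom_comp_substHom hN hM hNM) _

theorem GradedIso.trans {r₁ r₂ r₃ : Set (F3 k)} (h₁₂ : GradedIso k r₁ r₂)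
    (h₂₃ : GradedIso k r₂ r₃) : GradedIso k r₁ r₃ := by
  obtain ⟨φ, hφ⟩ := h₁₂
  obtain ⟨ψ, hψ⟩ := h₂₃
  exact ⟨φ.trans ψ, by rw [AlgEquiv.trans_toLinearMap, Submodule.map_comp, hφ, hψ]⟩

end LinearSubstitution

def normalRel (k : Type) [Field k] : Set (F3 k) :=
  {X k * Y k - Y k * X k, Z k * Y k + Y k * Z k, X k ^ 2 + 2 * Y k ^ 2 + Z k ^ 2}

section Relations

variable {k : Type} [Field k] (a b c : k)

local notation "v" => gen k (Vrel k a b c)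
local notation "n" => gen k (normalRel k)
local notation "u" => gen k (U'rel k)

theorem Vrel_gen_one_mul_gen_zero : v 1 * v 0 = v 0 * v 1 := by
  have h := lift_gen_eq_zero_of_mem (r := Vrel k a b c) (Set.mem_insert _ _)
  simp only [map_sub, map_mul, lift_gen_X, lift_gen_Y] at h
  linear_combination (norm := module) -h

theorem Vrel_gen_two_mul_gen_zero :
    v 2 * v 0 =
      a • (v 0 * v 0) + b • (v 0 * v 1) + c • (v 1 * v 1) + v 2 * v 2 - v 0 * v 2 := by
  have h := lift_gen_eq_zero_of_mem (r := Vrel k a b c)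
    (Set.mem_insert_of_mem _ (Set.mem_insert _ _))
  simp only [map_sub, map_add, map_mul, map_smul, pow_two, lift_gen_X, lift_gen_Y,
    lift_gen_Z] at h
  linear_combination (norm := module) h

theorem Vrel_gen_two_mul_gen_one : v 2 * v 1 = (2 : k) • (v 0 * v 1) - v 1 * v 2 := by
  have h := lift_gen_eq_zero_of_mem (r := Vrel k a b c)
    (Set.mem_insert_of_mem _ (Set.mem_insert_of_mem _ rfl))
  simp only [map_sub, map_add, map_mul, two_mul, lift_gen_X, lift_gen_Y, lift_gen_Z] at h
  linear_combination (norm := module) h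

theorem normalRel_gen_one_mul_gen_zero : n 1 * n 0 = n 0 * n 1 := by
  have h := lift_gen_eq_zero_of_mem (r := normalRel k) (Set.mem_insert _ _)
  simp only [map_sub, map_mul, lift_gen_X, lift_gen_Y] at h
  linear_combination (norm := module) -h

theorem normalRel_gen_two_mul_gen_one : n 2 * n 1 = -(n 1 * n 2) := by
  have h := lift_gen_eq_zero_of_mem (r := normalRel k)
    (Set.mem_insert_of_mem _ (Set.mem_insert _ _))
  simp only [map_add, map_mul, lift_gen_Y, lift_gen_Z] at h
  linear_combination (norm := module) h

theorem normalRel_gen_two_mul_gen_two : n 2 * n 2 = -(n 0 * n 0) - (2 : k) • (n 1 * n 1) := by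
  have h := lift_gen_eq_zero_of_mem (r := normalRel k)
    (Set.mem_insert_of_mem _ (Set.mem_insert_of_mem _ rfl))
  simp only [map_add, map_mul, pow_two, two_mul, lift_gen_X, lift_gen_Y, lift_gen_Z] at h
  linear_combination (norm := module) h

theorem U'rel_gen_zero_mul_gen_one : u 0 * u 1 = u 2 * u 0 := by
  have h := lift_gen_eq_zero_of_mem (r := U'rel k) (Set.mem_insert _ _)
  simp only [map_sub, map_mul, lift_gen_X, lift_gen_Y, lift_gen_Z] at h
  linear_combination (norm := module) h

theorem U'rel_gen_one_mul_gen_zero : u 1 * u 0 = u 0 * u 2 := by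
  have h := lift_gen_eq_zero_of_mem (r := U'rel k)
    (Set.mem_insert_of_mem _ (Set.mem_insert _ _))
  simp only [map_sub, map_mul, lift_gen_X, lift_gen_Y, lift_gen_Z] at h
  linear_combination (norm := module) h

theorem U'rel_gen_two_mul_gen_two : u 2 * u 2 = -(u 0 * u 0) - u 1 * u 1 := by
  have h := lift_gen_eq_zero_of_mem (r := U'rel k)
    (Set.mem_insert_of_mem _ (Set.mem_insert_of_mem _ rfl))
  simp only [map_add, map_mul, pow_two, lift_gen_X, lift_gen_Y, lift_gen_Z] at h
  linear_combination (norm := module) h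

end Relations

section NormalForm

variable {k : Type} [Field k]

theorem gradedIso_Vrel_normalRel (h2 : (2 : k) ≠ 0) {a b c : k} (ha : a ≠ 1)
    (hs : b ^ 2 - 4 * a * c + 4 * c ≠ 0) {ρ τ : k} (hρ : ρ ^ 2 = a - 1)
    (hτ : τ ^ 2 = -2 * (b ^ 2 - 4 * a * c + 4 * c)) :
    GradedIso k (Vrel k a b c) (normalRel k) := by
  have hρ0 : ρ ≠ 0 := by
    rintro rfl
    exact sub_ne_zero.mpr ha (by rw [← hρ]; ring)
  have hτ0 : τ ≠ 0 := by
    rintro rfl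
    have h : (-2 : k) * (b ^ 2 - 4 * a * c + 4 * c) = 0 := by rw [← hτ]; ring
    exact hs ((mul_eq_zero.mp h).resolve_left (neg_ne_zero.mpr h2))
  have h4 : (4 : k) ≠ 0 := by
    have := mul_ne_zero h2 h2
    norm_num at this
    exact this
  have h8 : (8 : k) ≠ 0 := by
    have := mul_ne_zero h4 h2
    norm_num at this
    exact this
  -- With `a` and `c` eliminated, every coefficient identity below is an identity of
  -- rational functions in `b`, `ρ`, `τ`.
  obtain rfl : a = ρ ^ 2 + 1 := by linear_combination -hρ
  obtain rfl : c = (τ ^ 2 + 2 * b ^ 2) / (8 * ρ ^ 2) := by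
    rw [eq_div_iff (mul_ne_zero h8 (pow_ne_zero 2 hρ0))]
    linear_combination -hτ
  refine gradedIso_of_linearSubst
    !![(4 * ρ ^ 2)⁻¹, -(b / (2 * ρ ^ 2 * τ)), 0; 0, τ⁻¹, 0;
      (4 * ρ ^ 2)⁻¹, -(b / (2 * ρ ^ 2 * τ)), (4 * ρ)⁻¹]
    !![4 * ρ ^ 2, 2 * b, 0; 0, τ, 0; -(4 * ρ), 0, 4 * ρ] ?_ ?_ ?_
  · rw [Matrix.mul_fin_three, Matrix.one_fin_three]
    congr 1
    ext i j
    fin_cases i <;> fin_cases j <;> simp <;> field_simp <;> ring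
  · intro p hp
    simp only [Vrel, Set.mem_insert_iff, Set.mem_singleton_iff] at hp
    rcases hp with rfl | rfl | rfl <;>
    simp only [map_sub, map_add, map_mul, map_smul, map_ofNat, pow_two,
      two_mul (α := quotAlg k _), linearSubst_X, linearSubst_Y, linearSubst_Z,
      Fin.sum_univ_three, Matrix.of_apply, Matrix.cons_val_zero, Matrix.cons_val_one,
      Matrix.cons_val_two, Matrix.head_cons, Matrix.tail_cons, zero_smul, add_zero, zero_add,
      mul_add, add_mul, smul_mul_assoc, mul_smul_comm, smul_smul, smul_add,
      normalRel_gen_one_mul_gen_zero, normalRel_gen_two_mul_gen_one,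
      normalRel_gen_two_mul_gen_two] <;>
    match_scalars <;> field_simp <;> ring
  · intro p hp
    simp only [normalRel, Set.mem_insert_iff, Set.mem_singleton_iff] at hp
    rcases hp with rfl | rfl | rfl <;>
    simp only [map_sub, map_add, map_mul, map_ofNat, pow_two,
      two_mul (α := quotAlg k _), linearSubst_X, linearSubst_Y, linearSubst_Z,
      Fin.sum_univ_three, Matrix.of_apply, Matrix.cons_val_zero, Matrix.cons_val_one,
      Matrix.cons_val_two, Matrix.head_cons, Matrix.tail_cons, zero_smul, add_zero, zero_add,
      mul_add, add_mul, smul_mul_assoc, mul_smul_comm, smul_smul, smul_add,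
      Vrel_gen_one_mul_gen_zero, Vrel_gen_two_mul_gen_zero, Vrel_gen_two_mul_gen_one] <;>
    match_scalars <;> field_simp <;> ring

theorem gradedIso_normalRel_U'rel (h2 : (2 : k) ≠ 0) : GradedIso k (normalRel k) (U'rel k) := by
  refine gradedIso_of_linearSubst !![0, 1, 1; 1, 0, 0; 0, 1, -1]
    !![0, 1, 0; 2⁻¹, 0, 2⁻¹; 2⁻¹, 0, -2⁻¹] ?_ ?_ ?_
  · rw [Matrix.mul_fin_three, Matrix.one_fin_three]
    congr 1
    ext i j
    fin_cases i <;> fin_cases j <;> simp <;> field_simp <;> ring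
  · intro p hp
    simp only [normalRel, Set.mem_insert_iff, Set.mem_singleton_iff] at hp
    rcases hp with rfl | rfl | rfl <;>
    simp only [map_sub, map_add, map_mul, map_ofNat, pow_two,
      two_mul (α := quotAlg k _), linearSubst_X, linearSubst_Y, linearSubst_Z,
      Fin.sum_univ_three, Matrix.of_apply, Matrix.cons_val_zero, Matrix.cons_val_one,
      Matrix.cons_val_two, Matrix.head_cons, Matrix.tail_cons, zero_smul, add_zero, zero_add,
      mul_add, add_mul, smul_mul_assoc, mul_smul_comm, smul_smul, smul_add,
      U'rel_gen_zero_mul_gen_one, U'rel_gen_one_mul_gen_zero, U'rel_gen_two_mul_gen_two] <;>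
    match_scalars <;> field_simp <;> ring
  · intro p hp
    simp only [U'rel, Set.mem_insert_iff, Set.mem_singleton_iff] at hp
    rcases hp with rfl | rfl | rfl <;>
    simp only [map_sub, map_add, map_mul, pow_two, linearSubst_X, linearSubst_Y, linearSubst_Z,
      Fin.sum_univ_three, Matrix.of_apply, Matrix.cons_val_zero, Matrix.cons_val_one,
      Matrix.cons_val_two, Matrix.head_cons, Matrix.tail_cons, zero_smul, add_zero, zero_add,
      mul_add, add_mul, smul_mul_assoc, mul_smul_comm, smul_smul, smul_add,
      normalRel_gen_one_mul_gen_zero, normalRel_gen_two_mul_gen_one,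
      normalRel_gen_two_mul_gen_two] <;>
    match_scalars <;> field_simp <;> ring

end NormalForm

theorem stmt2 (k : Type) [Field k] [IsAlgClosed k] (hchar : ringChar k ≠ 2)
    (a b c : k) (ha : a ≠ 1) (hs : b ^ 2 - 4 * a * c + 4 * c ≠ 0) :
    GradedIso k (Vrel k a b c) (U'rel k) := by
  have h2 : (2 : k) ≠ 0 := Ring.two_ne_zero hchar
  obtain ⟨ρ, hρ⟩ := IsAlgClosed.exists_pow_nat_eq (a - 1) two_pos
  obtain ⟨τ, hτ⟩ := IsAlgClosed.exists_pow_nat_eq (-2 * (b ^ 2 - 4 * a * c + 4 * c)) two_pos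
  exact (gradedIso_Vrel_normalRel h2 ha hs hρ hτ).trans (gradedIso_normalRel_U'rel h2)
end
end

section
/- Let k be an algebraically closed field with char k ≠ 2, and let a, b, c ∈ k with a ≠ 1. If b² − 4ac + 4c = 0, then the algebra V(a,b,c) = k⟨x,y,z⟩/⟨xy − yx, zx − a·x² − b·xy − c·y² + xz − z², zy − 2xy + yz⟩ is graded-isomorphic to U = k⟨x,y,z⟩/⟨xy − zx, yx − xz, y² + z²⟩. -/
noncomputable section

/-- Relations of `U = k⟨x,y,z⟩/⟨xy − zx, yx − xz, y² + z²⟩`. -/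
noncomputable def Urel (k : Type) [Field k] : Set (F3 k) :=
  {X k * Y k - Z k * X k, Y k * X k - X k * Z k, Y k ^ 2 + Z k ^ 2}

/-! ### Auxiliary material for `stmt3` -/

section Stmt3Aux

variable {k : Type} [Field k] {A : Type} [Ring A] [Algebra k A]

theorem stmt3_fwdA (x y z : A) (b s : k)
    (h1 : x * y - z * x = 0) (h2 : y * x - x * z = 0) :
    (b • x + y + z) * ((-(2 * s ^ 2)) • x) - ((-(2 * s ^ 2)) • x) * (b • x + y + z) = 0 := by
  rw [sub_eq_zero] at h1 h2
  simp only [mul_add, add_mul, smul_mul_assoc, mul_smul_comm, smul_smul, smul_add,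
    smul_neg, h1, h2]
  module

theorem stmt3_fwdB (x y z : A) (b c s : k) (hb : b ^ 2 = 4 * c * s ^ 2)
    (h1 : x * y - z * x = 0) (h2 : y * x - x * z = 0) (h3 : y ^ 2 + z ^ 2 = 0) :
    (b • x + (1 + s) • y + (1 - s) • z) * (b • x + y + z)
      - (s ^ 2 + 1) • (b • x + y + z) ^ 2
      - b • ((b • x + y + z) * ((-(2 * s ^ 2)) • x))
      - c • ((-(2 * s ^ 2)) • x) ^ 2
      + (b • x + y + z) * (b • x + (1 + s) • y + (1 - s) • z)
      - (b • x + (1 + s) • y + (1 - s) • z) ^ 2 = 0 := by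
  rw [sub_eq_zero] at h1 h2
  rw [pow_two y, pow_two z, add_comm] at h3
  have h3' : z * z = -(y * y) := eq_neg_of_add_eq_zero_left h3
  simp only [pow_two, mul_add, add_mul, smul_mul_assoc, mul_smul_comm, smul_smul,
    smul_add, smul_neg, h1, h2, h3']
  match_scalars <;> first
    | ring1
    | linear_combination (s ^ 2) * hb
    | linear_combination (2 * s ^ 2) * hb
    | linear_combination (-(s ^ 2)) * hb
    | linear_combination (-(2 * s ^ 2)) * hb

theorem stmt3_fwdC (x y z : A) (b s : k)
    (h1 : x * y - z * x = 0) (h2 : y * x - x * z = 0) :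
    (b • x + (1 + s) • y + (1 - s) • z) * ((-(2 * s ^ 2)) • x)
      - 2 * ((b • x + y + z) * ((-(2 * s ^ 2)) • x))
      + ((-(2 * s ^ 2)) • x) * (b • x + (1 + s) • y + (1 - s) • z) = 0 := by
  rw [sub_eq_zero] at h1 h2
  simp only [two_mul, mul_add, add_mul, smul_mul_assoc, mul_smul_comm, smul_smul,
    smul_add, smul_neg, h1, h2]
  module

theorem stmt3_bwd_setup (x y z : A) (b c s : k)
    (h1 : x * y - y * x = 0)
    (h2 : z * x - (s ^ 2 + 1) • x ^ 2 - b • (x * y) - c • y ^ 2 + x * z - z ^ 2 = 0)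
    (h3 : z * y - 2 * (x * y) + y * z = 0) :
    y * x = x * y ∧
      x * z = (s ^ 2 + 1) • (x * x) + b • (x * y) + c • (y * y) + z * z - z * x ∧
      z * y = 2 * (x * y) - y * z := by
  refine ⟨(sub_eq_zero.mp h1).symm, ?_, ?_⟩
  · have e : x * z - ((s ^ 2 + 1) • (x * x) + b • (x * y) + c • (y * y) + z * z - z * x)
        = z * x - (s ^ 2 + 1) • x ^ 2 - b • (x * y) - c • y ^ 2 + x * z - z ^ 2 := by
      rw [pow_two x, pow_two y, pow_two z]
      module
    exact sub_eq_zero.mp (e.trans h2)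
  · have e : z * y - (2 * (x * y) - y * z) = z * y - 2 * (x * y) + y * z := by abel
    exact sub_eq_zero.mp (e.trans h3)

theorem stmt3_bwdA (x y z : A) (b c s t u : k) (hst : s * t = 1) (hu : 2 * u = 1)
    (hb : b ^ 2 = 4 * c * s ^ 2)
    (h1 : x * y - y * x = 0)
    (h2 : z * x - (s ^ 2 + 1) • x ^ 2 - b • (x * y) - c • y ^ 2 + x * z - z ^ 2 = 0)
    (h3 : z * y - 2 * (x * y) + y * z = 0) :
    ((-(t ^ 2 * u)) • y) * (((s - 1) * (t * u)) • x + (b * (t ^ 2 * u ^ 2)) • y + (t * u) • z)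
      - (((s + 1) * (t * u)) • x + (b * (t ^ 2 * u ^ 2)) • y + (-(t * u)) • z)
        * ((-(t ^ 2 * u)) • y) = 0 := by
  obtain ⟨hv1, hv2, hv3⟩ := stmt3_bwd_setup x y z b c s h1 h2 h3
  simp only [pow_two, two_mul, mul_add, add_mul, mul_sub, sub_mul, smul_mul_assoc,
    mul_smul_comm, smul_smul, smul_add, smul_sub, smul_neg, hv1, hv2, hv3]
  match_scalars <;> ring1

theorem stmt3_bwdB (x y z : A) (b c s t u : k) (hst : s * t = 1) (hu : 2 * u = 1)
    (hb : b ^ 2 = 4 * c * s ^ 2)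
    (h1 : x * y - y * x = 0)
    (h2 : z * x - (s ^ 2 + 1) • x ^ 2 - b • (x * y) - c • y ^ 2 + x * z - z ^ 2 = 0)
    (h3 : z * y - 2 * (x * y) + y * z = 0) :
    (((s - 1) * (t * u)) • x + (b * (t ^ 2 * u ^ 2)) • y + (t * u) • z)
        * ((-(t ^ 2 * u)) • y)
      - ((-(t ^ 2 * u)) • y)
        * (((s + 1) * (t * u)) • x + (b * (t ^ 2 * u ^ 2)) • y + (-(t * u)) • z) = 0 := by
  obtain ⟨hv1, hv2, hv3⟩ := stmt3_bwd_setup x y z b c s h1 h2 h3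
  simp only [pow_two, two_mul, mul_add, add_mul, mul_sub, sub_mul, smul_mul_assoc,
    mul_smul_comm, smul_smul, smul_add, smul_sub, smul_neg, hv1, hv2, hv3]
  match_scalars <;> ring1

theorem stmt3_bwdC (x y z : A) (b c s t u : k) (hst : s * t = 1) (hu : 2 * u = 1)
    (hb : b ^ 2 = 4 * c * s ^ 2)
    (h1 : x * y - y * x = 0)
    (h2 : z * x - (s ^ 2 + 1) • x ^ 2 - b • (x * y) - c • y ^ 2 + x * z - z ^ 2 = 0)
    (h3 : z * y - 2 * (x * y) + y * z = 0) :
    (((s - 1) * (t * u)) • x + (b * (t ^ 2 * u ^ 2)) • y + (t * u) • z) ^ 2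
      + (((s + 1) * (t * u)) • x + (b * (t ^ 2 * u ^ 2)) • y + (-(t * u)) • z) ^ 2 = 0 := by
  obtain ⟨hv1, hv2, hv3⟩ := stmt3_bwd_setup x y z b c s h1 h2 h3
  simp only [pow_two, two_mul, mul_add, add_mul, mul_sub, sub_mul, smul_mul_assoc,
    mul_smul_comm, smul_smul, smul_add, smul_sub, smul_neg, hv1, hv2, hv3]
  match_scalars <;> first
    | ring1
    | linear_combination (4 * t ^ 2 * u ^ 3 * b) * hst + (2 * t ^ 2 * u ^ 2 * b) * hu
    | linear_combination (-(4 * t ^ 2 * u ^ 3 * b)) * hst + (-(2 * t ^ 2 * u ^ 2 * b)) * hu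
    | linear_combination (8 * t ^ 2 * u ^ 4 * c + 8 * s * t ^ 3 * u ^ 4 * c) * hst
        + (2 * t ^ 2 * u ^ 2 * c + 4 * t ^ 2 * u ^ 3 * c) * hu + (2 * t ^ 4 * u ^ 4) * hb
    | linear_combination (-(8 * t ^ 2 * u ^ 4 * c + 8 * s * t ^ 3 * u ^ 4 * c)) * hst
        + (-(2 * t ^ 2 * u ^ 2 * c + 4 * t ^ 2 * u ^ 3 * c)) * hu + (-(2 * t ^ 4 * u ^ 4)) * hb

end Stmt3Aux

section Stmt3Maps

variable (k : Type) [Field k]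

theorem stmt3_Urel_zero (w : F3 k) (hw : w ∈ Urel k) :
    RingQuot.mkAlgHom k (fun a b : F3 k => a ∈ Urel k ∧ b = 0) w = 0 := by
  have h := RingQuot.mkAlgHom_rel (S := k)
    (s := fun a b : F3 k => a ∈ Urel k ∧ b = 0) (x := w) (y := 0) ⟨hw, rfl⟩
  rwa [map_zero] at h

theorem stmt3_Vrel_zero (a b c : k) (w : F3 k) (hw : w ∈ Vrel k a b c) :
    RingQuot.mkAlgHom k (fun p q : F3 k => p ∈ Vrel k a b c ∧ q = 0) w = 0 := by
  have h := RingQuot.mkAlgHom_rel (S := k)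
    (s := fun p q : F3 k => p ∈ Vrel k a b c ∧ q = 0) (x := w) (y := 0) ⟨hw, rfl⟩
  rwa [map_zero] at h

theorem stmt3_genU_rel1 :
    gen k (Urel k) 0 * gen k (Urel k) 1 - gen k (Urel k) 2 * gen k (Urel k) 0 = 0 := by
  have h := stmt3_Urel_zero k _ (Set.mem_insert _ _)
  rw [map_sub, map_mul, map_mul] at h
  exact h

theorem stmt3_genU_rel2 :
    gen k (Urel k) 1 * gen k (Urel k) 0 - gen k (Urel k) 0 * gen k (Urel k) 2 = 0 := by
  have h := stmt3_Urel_zero k _ (Set.mem_insert_of_mem _ (Set.mem_insert _ _))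
  rw [map_sub, map_mul, map_mul] at h
  exact h

theorem stmt3_genU_rel3 :
    gen k (Urel k) 1 ^ 2 + gen k (Urel k) 2 ^ 2 = 0 := by
  have h := stmt3_Urel_zero k _
    (Set.mem_insert_of_mem _ (Set.mem_insert_of_mem _ rfl))
  rw [map_add, map_pow, map_pow] at h
  exact h

variable (a b c : k)

theorem stmt3_genV_rel1 :
    gen k (Vrel k a b c) 0 * gen k (Vrel k a b c) 1
      - gen k (Vrel k a b c) 1 * gen k (Vrel k a b c) 0 = 0 := by
  have h := stmt3_Vrel_zero k a b c _ (Set.mem_insert _ _)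
  rw [map_sub, map_mul, map_mul] at h
  exact h

theorem stmt3_genV_rel2 :
    gen k (Vrel k a b c) 2 * gen k (Vrel k a b c) 0
      - a • gen k (Vrel k a b c) 0 ^ 2
      - b • (gen k (Vrel k a b c) 0 * gen k (Vrel k a b c) 1)
      - c • gen k (Vrel k a b c) 1 ^ 2
      + gen k (Vrel k a b c) 0 * gen k (Vrel k a b c) 2
      - gen k (Vrel k a b c) 2 ^ 2 = 0 := by
  have h := stmt3_Vrel_zero k a b c _ (Set.mem_insert_of_mem _ (Set.mem_insert _ _))
  simp only [map_sub, map_add, map_mul, map_smul, map_pow] at h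
  exact h

theorem stmt3_genV_rel3 :
    gen k (Vrel k a b c) 2 * gen k (Vrel k a b c) 1
      - 2 * (gen k (Vrel k a b c) 0 * gen k (Vrel k a b c) 1)
      + gen k (Vrel k a b c) 1 * gen k (Vrel k a b c) 2 = 0 := by
  have h := stmt3_Vrel_zero k a b c _
    (Set.mem_insert_of_mem _ (Set.mem_insert_of_mem _ rfl))
  simp only [map_add, map_sub, map_mul, map_ofNat] at h
  exact h

/-- The free-algebra level substitution inducing `V → U`. -/
noncomputable def stmt3_phi0 (b s : k) : F3 k →ₐ[k] quotAlg k (Urel k) :=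
  FreeAlgebra.lift k
    ![b • gen k (Urel k) 0 + gen k (Urel k) 1 + gen k (Urel k) 2,
      (-(2 * s ^ 2)) • gen k (Urel k) 0,
      b • gen k (Urel k) 0 + (1 + s) • gen k (Urel k) 1 + (1 - s) • gen k (Urel k) 2]

/-- The free-algebra level substitution inducing `U → V`. -/
noncomputable def stmt3_psi0 (b c s t u : k) : F3 k →ₐ[k] quotAlg k (Vrel k (s ^ 2 + 1) b c) :=
  FreeAlgebra.lift k
    ![(-(t ^ 2 * u)) • gen k (Vrel k (s ^ 2 + 1) b c) 1,
      ((s - 1) * (t * u)) • gen k (Vrel k (s ^ 2 + 1) b c) 0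
        + (b * (t ^ 2 * u ^ 2)) • gen k (Vrel k (s ^ 2 + 1) b c) 1
        + (t * u) • gen k (Vrel k (s ^ 2 + 1) b c) 2,
      ((s + 1) * (t * u)) • gen k (Vrel k (s ^ 2 + 1) b c) 0
        + (b * (t ^ 2 * u ^ 2)) • gen k (Vrel k (s ^ 2 + 1) b c) 1
        + (-(t * u)) • gen k (Vrel k (s ^ 2 + 1) b c) 2]

noncomputable def stmt3_phiH (b c s : k) (hb : b ^ 2 = 4 * c * s ^ 2) :
    quotAlg k (Vrel k (s ^ 2 + 1) b c) →ₐ[k] quotAlg k (Urel k) :=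
  RingQuot.liftAlgHom k ⟨stmt3_phi0 k b s, by
    rintro p q ⟨hp, rfl⟩
    rw [map_zero]
    simp only [Vrel, Set.mem_insert_iff, Set.mem_singleton_iff] at hp
    rcases hp with rfl | rfl | rfl
    · simp only [map_sub, map_mul, stmt3_phi0, X, Y, Z, FreeAlgebra.lift_ι_apply,
        Matrix.cons_val_zero, Matrix.cons_val_one, Matrix.head_cons]
      exact stmt3_fwdA _ _ _ b s (stmt3_genU_rel1 k) (stmt3_genU_rel2 k)
    · simp only [map_sub, map_add, map_mul, map_smul, map_pow, stmt3_phi0, X, Y, Z,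
        FreeAlgebra.lift_ι_apply, Matrix.cons_val_zero, Matrix.cons_val_one,
        Matrix.head_cons, Matrix.cons_val_two, Matrix.tail_cons]
      exact stmt3_fwdB _ _ _ b c s hb (stmt3_genU_rel1 k) (stmt3_genU_rel2 k)
        (stmt3_genU_rel3 k)
    · simp only [map_add, map_sub, map_mul, map_ofNat, stmt3_phi0, X, Y, Z,
        FreeAlgebra.lift_ι_apply, Matrix.cons_val_zero, Matrix.cons_val_one,
        Matrix.head_cons, Matrix.cons_val_two, Matrix.tail_cons]
      exact stmt3_fwdC _ _ _ b s (stmt3_genU_rel1 k) (stmt3_genU_rel2 k)⟩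

noncomputable def stmt3_psiH (b c s t u : k) (hst : s * t = 1) (hu : 2 * u = 1)
    (hb : b ^ 2 = 4 * c * s ^ 2) :
    quotAlg k (Urel k) →ₐ[k] quotAlg k (Vrel k (s ^ 2 + 1) b c) :=
  RingQuot.liftAlgHom k ⟨stmt3_psi0 k b c s t u, by
    rintro p q ⟨hp, rfl⟩
    rw [map_zero]
    simp only [Urel, Set.mem_insert_iff, Set.mem_singleton_iff] at hp
    rcases hp with rfl | rfl | rfl
    · simp only [map_sub, map_mul, stmt3_psi0, X, Y, Z, FreeAlgebra.lift_ι_apply,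
        Matrix.cons_val_zero, Matrix.cons_val_one, Matrix.head_cons,
        Matrix.cons_val_two, Matrix.tail_cons]
      exact stmt3_bwdA _ _ _ b c s t u hst hu hb (stmt3_genV_rel1 k _ b c)
        (stmt3_genV_rel2 k _ b c) (stmt3_genV_rel3 k _ b c)
    · simp only [map_sub, map_mul, stmt3_psi0, X, Y, Z, FreeAlgebra.lift_ι_apply,
        Matrix.cons_val_zero, Matrix.cons_val_one, Matrix.head_cons,
        Matrix.cons_val_two, Matrix.tail_cons]
      exact stmt3_bwdB _ _ _ b c s t u hst hu hb (stmt3_genV_rel1 k _ b c)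
        (stmt3_genV_rel2 k _ b c) (stmt3_genV_rel3 k _ b c)
    · simp only [map_add, map_pow, stmt3_psi0, X, Y, Z, FreeAlgebra.lift_ι_apply,
        Matrix.cons_val_zero, Matrix.cons_val_one, Matrix.head_cons,
        Matrix.cons_val_two, Matrix.tail_cons]
      exact stmt3_bwdC _ _ _ b c s t u hst hu hb (stmt3_genV_rel1 k _ b c)
        (stmt3_genV_rel2 k _ b c) (stmt3_genV_rel3 k _ b c)⟩

theorem stmt3_comp1 (b c s t u : k) (hst : s * t = 1) (hu : 2 * u = 1)
    (hb : b ^ 2 = 4 * c * s ^ 2) :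
    (stmt3_phiH k b c s hb).comp (stmt3_psiH k b c s t u hst hu hb)
      = AlgHom.id k (quotAlg k (Urel k)) := by
  apply RingQuot.ringQuot_ext'
  apply FreeAlgebra.hom_ext
  funext i
  fin_cases i <;>
  · simp only [Function.comp_apply, AlgHom.coe_comp, AlgHom.coe_id, id_eq,
      stmt3_phiH, stmt3_psiH, stmt3_phi0, stmt3_psi0, gen,
      RingQuot.liftAlgHom_mkAlgHom_apply, FreeAlgebra.lift_ι_apply, map_add, map_smul,
      Matrix.cons_val_zero, Matrix.cons_val_one, Matrix.head_cons,
      Matrix.cons_val_two, Matrix.tail_cons, Fin.isValue, Fin.zero_eta, Fin.mk_one,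
      Fin.reduceFinMk, Nat.succ_eq_add_one, Nat.reduceAdd]
    match_scalars <;> first
      | ring1
      | linear_combination (2 * u + 2 * s * t * u) * hst + hu
      | linear_combination (-(2 * u + 2 * s * t * u)) * hst + (-1 : k) * hu
      | linear_combination (u * b - 2 * u ^ 2 * b - 2 * s * t * u ^ 2 * b) * hst - (u * b) * hu
      | linear_combination (-(u * b - 2 * u ^ 2 * b - 2 * s * t * u ^ 2 * b)) * hst + (u * b) * hu
      | linear_combination (2 * u) * hst + hu
      | linear_combination (-(2 * u)) * hst + (-1 : k) * hu
      | linear_combination (t ^ 2 * u * b) * hu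
      | linear_combination (-(t ^ 2 * u * b)) * hu

theorem stmt3_comp2 (b c s t u : k) (hst : s * t = 1) (hu : 2 * u = 1)
    (hb : b ^ 2 = 4 * c * s ^ 2) :
    (stmt3_psiH k b c s t u hst hu hb).comp (stmt3_phiH k b c s hb)
      = AlgHom.id k (quotAlg k (Vrel k (s ^ 2 + 1) b c)) := by
  apply RingQuot.ringQuot_ext'
  apply FreeAlgebra.hom_ext
  funext i
  fin_cases i <;>
  · simp only [Function.comp_apply, AlgHom.coe_comp, AlgHom.coe_id, id_eq,
      stmt3_phiH, stmt3_psiH, stmt3_phi0, stmt3_psi0, gen,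
      RingQuot.liftAlgHom_mkAlgHom_apply, FreeAlgebra.lift_ι_apply, map_add, map_smul,
      Matrix.cons_val_zero, Matrix.cons_val_one, Matrix.head_cons,
      Matrix.cons_val_two, Matrix.tail_cons, Fin.isValue, Fin.zero_eta, Fin.mk_one,
      Fin.reduceFinMk, Nat.succ_eq_add_one, Nat.reduceAdd]
    match_scalars <;> first
      | ring1
      | linear_combination (2 * u + 2 * s * t * u) * hst + hu
      | linear_combination (-(2 * u + 2 * s * t * u)) * hst + (-1 : k) * hu
      | linear_combination (u * b - 2 * u ^ 2 * b - 2 * s * t * u ^ 2 * b) * hst - (u * b) * hu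
      | linear_combination (-(u * b - 2 * u ^ 2 * b - 2 * s * t * u ^ 2 * b)) * hst + (u * b) * hu
      | linear_combination (2 * u) * hst + hu
      | linear_combination (-(2 * u)) * hst + (-1 : k) * hu
      | linear_combination (t ^ 2 * u * b) * hu
      | linear_combination (-(t ^ 2 * u * b)) * hu

theorem stmt3_phiH_gen (b c s : k) (hb : b ^ 2 = 4 * c * s ^ 2) (i : Fin 3) :
    stmt3_phiH k b c s hb (gen k (Vrel k (s ^ 2 + 1) b c) i)
      = ![b • gen k (Urel k) 0 + gen k (Urel k) 1 + gen k (Urel k) 2,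
          (-(2 * s ^ 2)) • gen k (Urel k) 0,
          b • gen k (Urel k) 0 + (1 + s) • gen k (Urel k) 1 + (1 - s) • gen k (Urel k) 2] i := by
  simp only [stmt3_phiH, stmt3_phi0, gen, RingQuot.liftAlgHom_mkAlgHom_apply,
    FreeAlgebra.lift_ι_apply]

theorem stmt3_psiH_gen (b c s t u : k) (hst : s * t = 1) (hu : 2 * u = 1)
    (hb : b ^ 2 = 4 * c * s ^ 2) (i : Fin 3) :
    stmt3_psiH k b c s t u hst hu hb (gen k (Urel k) i)
      = ![(-(t ^ 2 * u)) • gen k (Vrel k (s ^ 2 + 1) b c) 1,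
          ((s - 1) * (t * u)) • gen k (Vrel k (s ^ 2 + 1) b c) 0
            + (b * (t ^ 2 * u ^ 2)) • gen k (Vrel k (s ^ 2 + 1) b c) 1
            + (t * u) • gen k (Vrel k (s ^ 2 + 1) b c) 2,
          ((s + 1) * (t * u)) • gen k (Vrel k (s ^ 2 + 1) b c) 0
            + (b * (t ^ 2 * u ^ 2)) • gen k (Vrel k (s ^ 2 + 1) b c) 1
            + (-(t * u)) • gen k (Vrel k (s ^ 2 + 1) b c) 2] i := by
  simp only [stmt3_psiH, stmt3_psi0, gen, RingQuot.liftAlgHom_mkAlgHom_apply,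
    FreeAlgebra.lift_ι_apply]

end Stmt3Maps

theorem stmt3 (k : Type) [Field k] [IsAlgClosed k] (hchar : ringChar k ≠ 2)
    (a b c : k) (ha : a ≠ 1) (hs : b ^ 2 - 4 * a * c + 4 * c = 0) :
    GradedIso k (Vrel k a b c) (Urel k) := by
  obtain ⟨s, hs2⟩ := IsAlgClosed.exists_pow_nat_eq (a - 1) two_pos
  have haa : a = s ^ 2 + 1 := by linear_combination -hs2
  subst haa
  have h2 : (2 : k) ≠ 0 := Ring.two_ne_zero hchar
  have hsne : s ≠ 0 := by
    intro h
    apply ha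
    rw [h]
    norm_num
  have hst : s * s⁻¹ = 1 := mul_inv_cancel₀ hsne
  have hu : 2 * (2 : k)⁻¹ = 1 := mul_inv_cancel₀ h2
  have hb : b ^ 2 = 4 * c * s ^ 2 := by linear_combination hs
  refine ⟨AlgEquiv.ofAlgHom (stmt3_phiH k b c s hb)
      (stmt3_psiH k b c s s⁻¹ 2⁻¹ hst hu hb)
      (stmt3_comp1 k b c s s⁻¹ 2⁻¹ hst hu hb)
      (stmt3_comp2 k b c s s⁻¹ 2⁻¹ hst hu hb), ?_⟩
  rw [AlgEquiv.toLinearMap_ofAlgHom]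
  apply le_antisymm
  · rw [Submodule.map_le_iff_le_comap, genSpan, Submodule.span_le]
    rintro w ⟨i, rfl⟩
    simp only [SetLike.mem_coe, Submodule.mem_comap, AlgHom.toLinearMap_apply]
    rw [stmt3_phiH_gen]
    have m0 : gen k (Urel k) 0 ∈ genSpan k (Urel k) := Submodule.subset_span ⟨0, rfl⟩
    have m1 : gen k (Urel k) 1 ∈ genSpan k (Urel k) := Submodule.subset_span ⟨1, rfl⟩
    have m2 : gen k (Urel k) 2 ∈ genSpan k (Urel k) := Submodule.subset_span ⟨2, rfl⟩
    fin_cases i <;> simp only [Matrix.cons_val_zero, Matrix.cons_val_one,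
      Matrix.head_cons, Matrix.cons_val_two, Matrix.tail_cons, Fin.zero_eta, Fin.mk_one,
      Fin.reduceFinMk, Nat.succ_eq_add_one, Nat.reduceAdd, Fin.isValue]
    · exact Submodule.add_mem _ (Submodule.add_mem _ (Submodule.smul_mem _ _ m0) m1) m2
    · exact Submodule.smul_mem _ _ m0
    · exact Submodule.add_mem _ (Submodule.add_mem _ (Submodule.smul_mem _ _ m0)
        (Submodule.smul_mem _ _ m1)) (Submodule.smul_mem _ _ m2)
  · rw [genSpan, Submodule.span_le]
    rintro w ⟨i, rfl⟩
    simp only [SetLike.mem_coe]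
    refine Submodule.mem_map.mpr
      ⟨stmt3_psiH k b c s s⁻¹ 2⁻¹ hst hu hb (gen k (Urel k) i), ?_, ?_⟩
    · rw [stmt3_psiH_gen]
      have m0 : gen k (Vrel k (s ^ 2 + 1) b c) 0 ∈ genSpan k (Vrel k (s ^ 2 + 1) b c) :=
        Submodule.subset_span ⟨0, rfl⟩
      have m1 : gen k (Vrel k (s ^ 2 + 1) b c) 1 ∈ genSpan k (Vrel k (s ^ 2 + 1) b c) :=
        Submodule.subset_span ⟨1, rfl⟩
      have m2 : gen k (Vrel k (s ^ 2 + 1) b c) 2 ∈ genSpan k (Vrel k (s ^ 2 + 1) b c) :=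
        Submodule.subset_span ⟨2, rfl⟩
      fin_cases i <;> simp only [Matrix.cons_val_zero, Matrix.cons_val_one,
        Matrix.head_cons, Matrix.cons_val_two, Matrix.tail_cons, Fin.zero_eta, Fin.mk_one,
        Fin.reduceFinMk, Nat.succ_eq_add_one, Nat.reduceAdd, Fin.isValue]
      · exact Submodule.smul_mem _ _ m1
      · exact Submodule.add_mem _ (Submodule.add_mem _ (Submodule.smul_mem _ _ m0)
          (Submodule.smul_mem _ _ m1)) (Submodule.smul_mem _ _ m2)
      · exact Submodule.add_mem _ (Submodule.add_mem _ (Submodule.smul_mem _ _ m0)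
          (Submodule.smul_mem _ _ m1)) (Submodule.smul_mem _ _ m2)
    · have h := AlgHom.congr_fun (stmt3_comp1 k b c s s⁻¹ 2⁻¹ hst hu hb) (gen k (Urel k) i)
      simpa using h
end
end

section
/- Let k be an algebraically closed field with char k ≠ 2, and let q, q' ∈ k. There is a graded isomorphism R(q) ≅ R(q') if and only if q = q'. Moreover, for every q ∈ k, the three algebras R(q), R₀, and R₁ are pairwise non-isomorphic as graded algebras (no graded isomorphism exists between any two distinct ones). -/
noncomputable section

/-- Relations of `R(q) = k⟨x,y,z⟩/⟨xy − yx, zy, q·zx − xz − z²⟩`. -/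
noncomputable def Rrel (k : Type) [Field k] (q : k) : Set (F3 k) :=
  {X k * Y k - Y k * X k, Z k * Y k, q • (Z k * X k) - X k * Z k - Z k ^ 2}

/-- Relations of `R₀ = k⟨x,y,z⟩/⟨xy − yx, zy, zx − z²⟩`. -/
noncomputable def R0rel (k : Type) [Field k] : Set (F3 k) :=
  {X k * Y k - Y k * X k, Z k * Y k, Z k * X k - Z k ^ 2}

/-- Relations of `R₁ = k⟨x,y,z⟩/⟨xy − yx, zy, zx − yz − z²⟩`. -/
noncomputable def R1rel (k : Type) [Field k] : Set (F3 k) :=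
  {X k * Y k - Y k * X k, Z k * Y k, Z k * X k - Y k * Z k - Z k ^ 2}

/-!
A graded isomorphism between quadratic algebras `T(V)/(R)` and `T(V)/(R')` is induced by some
`g ∈ GL(V)` with `(g ⊗ g)(R) ⊆ R'`. Recording a quadratic element `∑ cᵢⱼ xᵢxⱼ` by its coefficient
matrix `c`, the substitution `g` acts by `c ↦ gᵀ c g`, and `∑ cᵢⱼ xᵢxⱼ` vanishes in `T(V)/(R)` only
if `c ∈ R`, as the action of `T(V)` on `k ⊕ V ⊕ (V ⊗ V)/R` shows.

In all the algebras at hand, the relations `xy - yx` and `zy` of the target and the `z²` term of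
its third relation force such a `g` to be `x ↦ ax + by, y ↦ dy, z ↦ ez` with `a, d, e ≠ 0`. Then
the `xz` term in the image of `q·zx - xz - z²` has no counterpart in `R₀` or `R₁`, an image of
`zx - z²` in `R₁` would need a `yz` term, and between the `R(q)` the coefficients of `xz`, `z²`
and `zx` give `a = e` and then `q = q'`.
-/

open scoped Matrix

namespace FreeAlgebra

variable {k n : Type*} [CommRing k]

section QuadForm

variable [Fintype n]

variable (k) in
def quadForm : Matrix n n k →ₗ[k] FreeAlgebra k n where
  toFun c := ∑ i, ∑ j, c i j • (ι k i * ι k j)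
  map_add' c d := by simp only [Matrix.add_apply, add_smul, Finset.sum_add_distrib]
  map_smul' a c := by simp only [Matrix.smul_apply, smul_eq_mul, mul_smul, Finset.smul_sum,
    RingHom.id_apply]

def linSubst (g : Matrix n n k) : FreeAlgebra k n →ₐ[k] FreeAlgebra k n :=
  lift k fun i => ∑ j, g i j • ι k j

theorem linSubst_quadForm (g c : Matrix n n k) :
    linSubst g (quadForm k c) = quadForm k (gᵀ * c * g) := by
  let T : n → n → n → n → FreeAlgebra k n := fun i j a b =>
    (g i a * c i j * g j b) • (ι k a * ι k b)
  calc linSubst g (quadForm k c) = ∑ i, ∑ j, ∑ a, ∑ b, T i j a b := by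
        simp only [T, quadForm, LinearMap.coe_mk, AddHom.coe_mk, map_sum, map_smul, map_mul,
          linSubst, lift_ι_apply, Finset.sum_mul_sum, smul_mul_smul_comm, Finset.smul_sum,
          smul_smul, mul_assoc, mul_left_comm]
    _ = ∑ a, ∑ b, ∑ j, ∑ i, T i j a b := by
        refine Finset.sum_comm_cycle.trans (Finset.sum_congr rfl fun a _ => ?_)
        exact Finset.sum_comm_cycle.trans (Finset.sum_congr rfl fun b _ => Finset.sum_comm)
    _ = quadForm k (gᵀ * c * g) := by
        simp only [T, quadForm, LinearMap.coe_mk, AddHom.coe_mk, Matrix.mul_apply,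
          Matrix.transpose_apply, Finset.sum_mul, Finset.sum_smul]

end QuadForm

section TruncRep

variable [DecidableEq n] (S : Submodule k (Matrix n n k))

/-- The action by left multiplication of the free algebra on its part of degree `≤ 2` modulo `S`,
i.e. on `k ⊕ V ⊕ (V ⊗ V)/S`, with `V ⊗ V` written as matrices. -/
def truncRep : FreeAlgebra k n →ₐ[k] Module.End k (k × (n → k) × (Matrix n n k ⧸ S)) :=
  lift k fun i =>
    { toFun p := (0, p.1 • Pi.single i 1, S.mkQ (Matrix.vecMulVec (Pi.single i 1) p.2.1))
      map_add' p p' := by simp [add_smul, Matrix.vecMulVec_add]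
      map_smul' a p := by simp [smul_smul, Matrix.vecMulVec_smul] }

theorem truncRep_ι_apply (i : n) (p : k × (n → k) × (Matrix n n k ⧸ S)) :
    truncRep S (ι k i) p =
      (0, p.1 • Pi.single i 1, S.mkQ (Matrix.vecMulVec (Pi.single i 1) p.2.1)) := by
  simp [truncRep]

theorem truncRep_ι_truncRep_ι_apply (i j : n) (p : k × (n → k) × (Matrix n n k ⧸ S)) :
    truncRep S (ι k i) (truncRep S (ι k j) p) = (0, 0, p.1 • S.mkQ (Matrix.single i j 1)) := by
  simp [truncRep_ι_apply, Matrix.vecMulVec_smul, Matrix.single_eq_single_vecMulVec_single]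

theorem truncRep_quadForm_apply [Fintype n] (c : Matrix n n k) (p : k × (n → k) × (Matrix n n k ⧸ S)) :
    truncRep S (quadForm k c) p = (0, 0, p.1 • S.mkQ c) := by
  conv_rhs => rw [Matrix.matrix_eq_sum_single c]
  refine Prod.ext ?_ (Prod.ext ?_ ?_) <;>
    simp [quadForm, truncRep_ι_truncRep_ι_apply, Prod.fst_sum, Prod.snd_sum, Finset.smul_sum,
      ← Submodule.Quotient.mk_smul, Matrix.smul_single, mul_comm]

end TruncRep

end FreeAlgebra

section QuadraticAlgebra

open FreeAlgebra

variable {k : Type} [Field k]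

abbrev quotMk (rels : Set (F3 k)) : F3 k →ₐ[k] quotAlg k rels :=
  RingQuot.mkAlgHom k _

theorem quotMk_quadForm_of_mem {s : Set (Matrix (Fin 3) (Fin 3) k)} {c : Matrix (Fin 3) (Fin 3) k}
    (hc : c ∈ s) : quotMk (quadForm k '' s) (quadForm k c) = 0 :=
  (RingQuot.mkAlgHom_rel k ⟨⟨c, hc, rfl⟩, rfl⟩).trans (map_zero _)

variable (s : Set (Matrix (Fin 3) (Fin 3) k))

def quotTruncRep : quotAlg k (quadForm k '' s) →ₐ[k]
    Module.End k (k × (Fin 3 → k) × (Matrix (Fin 3) (Fin 3) k ⧸ Submodule.span k s)) :=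
  RingQuot.liftAlgHom k ⟨truncRep _, by
    rintro _ _ ⟨⟨c, hc, rfl⟩, rfl⟩
    refine LinearMap.ext fun p => ?_
    simp [truncRep_quadForm_apply, (Submodule.Quotient.mk_eq_zero _).mpr
      (Submodule.subset_span hc)]⟩

theorem quotTruncRep_quotMk (x : F3 k) :
    quotTruncRep s (quotMk _ x) = truncRep (Submodule.span k s) x :=
  RingQuot.liftAlgHom_mkAlgHom_apply _ _ _ _

theorem quotMk_quadForm_eq_zero_iff (c : Matrix (Fin 3) (Fin 3) k) :
    quotMk (quadForm k '' s) (quadForm k c) = 0 ↔ c ∈ Submodule.span k s := by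
  constructor
  · intro h
    have h1 := congr($(congrArg (quotTruncRep s) h) (1, 0, 0))
    rw [quotTruncRep_quotMk, truncRep_quadForm_apply, map_zero] at h1
    simpa using congrArg (fun p => p.2.2) h1
  · intro hc
    show c ∈ LinearMap.ker ((quotMk (quadForm k '' s)).toLinearMap ∘ₗ quadForm k)
    exact Submodule.span_le.mpr (fun c hc => quotMk_quadForm_of_mem hc) hc

theorem linearIndependent_gen : LinearIndependent k (gen k (quadForm k '' s)) := by
  refine Fintype.linearIndependent_iff.mpr fun v hv => ?_
  have h1 : quotTruncRep s (∑ i, v i • gen k _ i) (1, 0, 0) = (0, v, 0) := by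
    refine Prod.ext ?_ (Prod.ext ?_ ?_) <;>
      simp [gen, quotTruncRep_quotMk, truncRep_ι_apply, Prod.fst_sum, Prod.snd_sum,
        ← pi_eq_sum_univ']
  rw [hv, map_zero, LinearMap.zero_apply] at h1
  exact fun i => congr_fun (congrArg (fun p => p.2.1) h1).symm i

variable {s} in
theorem exists_matrix_of_injective {t : Set (Matrix (Fin 3) (Fin 3) k)}
    (φ : quotAlg k (quadForm k '' s) →ₐ[k] quotAlg k (quadForm k '' t))
    (hφ : Function.Injective φ) (hgen : ∀ i, φ (gen k _ i) ∈ genSpan k (quadForm k '' t)) :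
    ∃ g : Matrix (Fin 3) (Fin 3) k, g.det ≠ 0 ∧ ∀ c ∈ s, gᵀ * c * g ∈ Submodule.span k t := by
  choose g hg using fun i => (Submodule.mem_span_range_iff_exists_fun k).mp (hgen i)
  have hsubst : φ.comp (quotMk _) = (quotMk _).comp (linSubst (Matrix.of g)) :=
    FreeAlgebra.hom_ext (funext fun i => by
      simp only [Function.comp_apply, AlgHom.comp_apply, linSubst, lift_ι_apply,
        Matrix.of_apply, map_sum, map_smul]
      exact (hg i).symm)
  refine ⟨Matrix.of g, fun hdet => ?_, fun c hc => ?_⟩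
  · obtain ⟨v, hv0, hv⟩ := Matrix.exists_vecMul_eq_zero_iff.mpr hdet
    refine hv0 (funext <| Fintype.linearIndependent_iff.mp (linearIndependent_gen s) v ?_)
    refine hφ ?_
    calc φ (∑ i, v i • gen k _ i) = ∑ j, (v ᵥ* Matrix.of g) j • gen k _ j := by
          simp only [map_sum, map_smul, ← hg, Finset.smul_sum, smul_smul, Matrix.vecMul,
            dotProduct, Matrix.of_apply, Finset.sum_smul]
          exact Finset.sum_comm
      _ = φ 0 := by simp [hv]
  · rw [← quotMk_quadForm_eq_zero_iff, ← linSubst_quadForm, ← AlgHom.comp_apply, ← hsubst,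
      AlgHom.comp_apply, quotMk_quadForm_of_mem hc, map_zero]

theorem GradedIso.exists_matrix {s t : Set (Matrix (Fin 3) (Fin 3) k)}
    (h : GradedIso k (quadForm k '' s) (quadForm k '' t)) :
    ∃ g : Matrix (Fin 3) (Fin 3) k, g.det ≠ 0 ∧ ∀ c ∈ s, gᵀ * c * g ∈ Submodule.span k t := by
  obtain ⟨φ, hφ⟩ := h
  refine exists_matrix_of_injective φ.toAlgHom φ.injective fun i => ?_
  rw [← hφ]
  exact Submodule.mem_map_of_mem (Submodule.subset_span ⟨i, rfl⟩)

end QuadraticAlgebra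

section Relations

open FreeAlgebra

variable {k : Type} [Field k]

def relComm : Matrix (Fin 3) (Fin 3) k := !![0, 1, 0; -1, 0, 0; 0, 0, 0]
def relZY : Matrix (Fin 3) (Fin 3) k := !![0, 0, 0; 0, 0, 0; 0, 1, 0]
def relR (q : k) : Matrix (Fin 3) (Fin 3) k := !![0, 0, -1; 0, 0, 0; q, 0, -1]
def relR₀ : Matrix (Fin 3) (Fin 3) k := !![0, 0, 0; 0, 0, 0; 1, 0, -1]
def relR₁ : Matrix (Fin 3) (Fin 3) k := !![0, 0, 0; 0, 0, -1; 1, 0, -1]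

theorem Rrel_eq (q : k) : Rrel k q = quadForm k '' {relComm, relZY, relR q} := by
  simp [Rrel, Set.image_insert_eq, quadForm, Fin.sum_univ_three, relComm, relZY, relR, X, Y, Z,
    sq, sub_eq_add_neg, add_assoc, add_left_comm]

theorem R0rel_eq : R0rel k = quadForm k '' {relComm, relZY, relR₀} := by
  simp [R0rel, Set.image_insert_eq, quadForm, Fin.sum_univ_three, relComm, relZY, relR₀, X, Y, Z,
    sq, sub_eq_add_neg]

theorem R1rel_eq : R1rel k = quadForm k '' {relComm, relZY, relR₁} := by
  simp [R1rel, Set.image_insert_eq, quadForm, Fin.sum_univ_three, relComm, relZY, relR₁, X, Y, Z,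
    sq, sub_eq_add_neg, add_assoc, add_left_comm]

section Entries

attribute [local simp] relComm relZY relR relR₀ relR₁ Matrix.mul_apply Fin.sum_univ_three

theorem lastCol_eq_zero_of_relComm_mem_span {N g : Matrix (Fin 3) (Fin 3) k} (hN : N 2 2 = -1)
    (hg : g.det ≠ 0) (hcomm : gᵀ * relComm * g ∈ Submodule.span k {relComm, relZY, N}) :
    g 0 2 = 0 ∧ g 1 2 = 0 := by
  obtain ⟨α, β, γ, h⟩ := Submodule.mem_span_triple.mp hcomm
  have hγ : γ = 0 := by simpa [hN, mul_comm] using congr_fun₂ h 2 2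
  have E0 : g 0 0 * g 1 2 - g 1 0 * g 0 2 = 0 := by
    simpa [hγ, sub_eq_add_neg, add_comm, eq_comm] using congr_fun₂ h 0 2
  have E1 : g 0 1 * g 1 2 - g 1 1 * g 0 2 = 0 := by
    simpa [hγ, sub_eq_add_neg, add_comm, eq_comm] using congr_fun₂ h 1 2
  -- `E0` and `E1` say that `(g 1 2, -g 0 2, 0)` is a left null vector of `g`
  have h02 : g 0 2 * g.det = 0 := by
    rw [Matrix.det_fin_three]
    linear_combination (g 0 1 * g 2 2 - g 0 2 * g 2 1) * E0 - (g 0 0 * g 2 2 - g 0 2 * g 2 0) * E1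
  have h12 : g 1 2 * g.det = 0 := by
    rw [Matrix.det_fin_three]
    linear_combination (g 1 1 * g 2 2 - g 1 2 * g 2 1) * E0 - (g 1 0 * g 2 2 - g 1 2 * g 2 0) * E1
  exact ⟨(mul_eq_zero.mp h02).resolve_right hg, (mul_eq_zero.mp h12).resolve_right hg⟩

theorem eq_upperTriangular_of_mem_span {N g : Matrix (Fin 3) (Fin 3) k} (hN : N 2 2 = -1)
    (hg : g.det ≠ 0) (hcomm : gᵀ * relComm * g ∈ Submodule.span k {relComm, relZY, N})
    (hzy : gᵀ * relZY * g ∈ Submodule.span k {relComm, relZY, N}) :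
    ∃ a b d e : k, a ≠ 0 ∧ d ≠ 0 ∧ e ≠ 0 ∧ g = !![a, b, 0; 0, d, 0; 0, 0, e] := by
  obtain ⟨h02, h12⟩ := lastCol_eq_zero_of_relComm_mem_span hN hg hcomm
  obtain ⟨α, β, γ, h⟩ := Submodule.mem_span_triple.mp hzy
  have hγ : γ = 0 := by simpa [hN, h12] using congr_fun₂ h 2 2
  have h22 : g 2 2 ≠ 0 := fun h22 => hg (by rw [Matrix.det_fin_three, h02, h12, h22]; ring)
  have h10 : g 1 0 = 0 := by simpa [hγ, h22] using congr_fun₂ h 2 0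
  obtain ⟨⟨h00, h11⟩, -⟩ : (g 0 0 ≠ 0 ∧ g 1 1 ≠ 0) ∧ g 2 2 ≠ 0 := by
    simpa [Matrix.det_fin_three, h02, h12, h10] using hg
  have hα : α = 0 := by simpa [hγ, h10] using congr_fun₂ h 1 0
  have h20 : g 2 0 = 0 := by simpa [hγ, hα, h11] using congr_fun₂ h 0 1
  have h21 : g 2 1 = 0 := by simpa [hγ, h11] using congr_fun₂ h 1 1
  refine ⟨g 0 0, g 0 1, g 1 1, g 2 2, h00, h11, h22, ?_⟩
  ext i j
  fin_cases i <;> fin_cases j <;> simp [h02, h12, h10, h20, h21]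

theorem GradedIso.exists_upperTriangular {M N : Matrix (Fin 3) (Fin 3) k} (hN : N 2 2 = -1)
    (h : GradedIso k (quadForm k '' {relComm, relZY, M}) (quadForm k '' {relComm, relZY, N})) :
    ∃ a b d e : k, a ≠ 0 ∧ d ≠ 0 ∧ e ≠ 0 ∧ ∃ α β γ : k,
      α • relComm + β • relZY + γ • N =
        !![a, b, 0; 0, d, 0; 0, 0, e]ᵀ * M * !![a, b, 0; 0, d, 0; 0, 0, e] := by
  obtain ⟨g, hdet, hg⟩ := h.exists_matrix
  obtain ⟨a, b, d, e, ha, hd, he, rfl⟩ :=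
    eq_upperTriangular_of_mem_span hN hdet (hg _ (by simp)) (hg _ (by simp))
  exact ⟨a, b, d, e, ha, hd, he, Submodule.mem_span_triple.mp (hg M (by simp))⟩

theorem eq_of_gradedIso_Rrel {q q' : k} (h : GradedIso k (Rrel k q) (Rrel k q')) : q = q' := by
  rw [Rrel_eq, Rrel_eq] at h
  obtain ⟨a, b, d, e, ha, -, he, α, β, γ, h⟩ := h.exists_upperTriangular (by simp)
  have h02 : γ = a * e := by simpa using congr_fun₂ h 0 2
  have h22 : γ = e * e := by simpa using congr_fun₂ h 2 2
  have h20 : γ * q' = e * q * a := by simpa using congr_fun₂ h 2 0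
  obtain rfl : a = e := mul_right_cancel₀ he (h02.symm.trans h22)
  have : a * a * (q - q') = 0 := by linear_combination -h20 + q' * h22
  simpa [ha, sub_eq_zero] using this

theorem not_gradedIso_Rrel {q : k} {N : Matrix (Fin 3) (Fin 3) k} (hN22 : N 2 2 = -1)
    (hN02 : N 0 2 = 0) : ¬ GradedIso k (Rrel k q) (quadForm k '' {relComm, relZY, N}) := by
  rw [Rrel_eq]
  intro h
  obtain ⟨a, b, d, e, ha, -, he, α, β, γ, h⟩ := h.exists_upperTriangular hN22
  simpa [hN02, ha, he] using congr_fun₂ h 0 2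

theorem not_gradedIso_R0rel_R1rel : ¬ GradedIso k (R0rel k) (R1rel k) := by
  rw [R0rel_eq, R1rel_eq]
  intro h
  obtain ⟨a, b, d, e, -, -, he, α, β, γ, h⟩ := h.exists_upperTriangular (by simp)
  have hγ : γ = 0 := by simpa using congr_fun₂ h 1 2
  simpa [hγ, he] using congr_fun₂ h 2 2

end Entries

end Relations

theorem stmt5_general (k : Type) [Field k] (q q' : k) :
    (GradedIso k (Rrel k q) (Rrel k q') ↔ q = q') ∧
    (∀ q : k, ¬ GradedIso k (Rrel k q) (R0rel k) ∧
      ¬ GradedIso k (Rrel k q) (R1rel k)) ∧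
    ¬ GradedIso k (R0rel k) (R1rel k) := by
  refine ⟨⟨eq_of_gradedIso_Rrel, ?_⟩, fun q => ⟨?_, ?_⟩, not_gradedIso_R0rel_R1rel⟩
  · rintro rfl
    exact ⟨AlgEquiv.refl, Submodule.map_id _⟩
  · rw [R0rel_eq]
    exact not_gradedIso_Rrel (by simp [relR₀]) (by simp [relR₀])
  · rw [R1rel_eq]
    exact not_gradedIso_Rrel (by simp [relR₁]) (by simp [relR₁])

theorem stmt5 (k : Type) [Field k] [IsAlgClosed k] (hchar : ringChar k ≠ 2)
    (q q' : k) :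
    (GradedIso k (Rrel k q) (Rrel k q') ↔ q = q') ∧
    (∀ q : k, ¬ GradedIso k (Rrel k q) (R0rel k) ∧
      ¬ GradedIso k (Rrel k q) (R1rel k)) ∧
    ¬ GradedIso k (R0rel k) (R1rel k) :=
  stmt5_general k q q'
end
end

section
/- Let k be an algebraically closed field with char k ≠ 2, and let d, D, d', D' ∈ k with d ≠ 1, D ≠ 1, d' ≠ 1, D' ≠ 1. Then there is a graded isomorphism S(d,D) ≅ S(d',D') if and only if (d',D') = (d,D) or (d',D') = (D,d). -/
noncomputable section

/-- Relations of `S(d,D) = k⟨x,y,z⟩/⟨xy − yx, zx − d·xz, zy − D·yz⟩`. -/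
noncomputable def SdDrel (k : Type) [Field k] (d D : k) : Set (F3 k) :=
  {X k * Y k - Y k * X k, Z k * X k - d • (X k * Z k), Z k * Y k - D • (Y k * Z k)}

/-!
Write `x, y, z` for the generators. A graded isomorphism `φ : S(d,D) ≃ S(d',D')` sends them to
linear forms `u, v, w` in the generators with invertible coefficient matrix, subject to
`w u = d u w` and `w v = D v w`. The degree-two normal monomials of `S(d',D')` are linearly
independent (the algebra acts faithfully on the monomials `x^i y^j z^l`), so these relations can
be compared coefficientwise. As `d, D ≠ 1`, the `(x, y)`-parts of `u` and `w` have zero product,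
and likewise for `v` and `w`; invertibility then forces `w` to involve `z`, whence `u, v` lie in
the span of `x, y`. The `xz` and `yz` coefficients now give `d' = d` if `u` involves `x` and
`D' = d` if `u` involves `y`, and similarly for `v` with `D`; as `u, v` are independent, either
`u` involves `x` and `v` involves `y`, or the other way round. Conversely, exchanging `x` and `y`
is an isomorphism `S(d,D) ≅ S(D,d)`.
-/

namespace SdD

variable {k : Type} [Field k]

section Generators

variable {r r' : Set (F3 k)}

lemma mkAlgHom_eq_zero_of_mem {a : F3 k} (ha : a ∈ r) :
    RingQuot.mkAlgHom k (fun a b : F3 k => a ∈ r ∧ b = 0) a = 0 := by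
  simpa using RingQuot.mkAlgHom_rel k (s := fun a b : F3 k => a ∈ r ∧ b = 0) ⟨ha, rfl⟩

lemma algHom_ext {A : Type} [Semiring A] [Algebra k A] {f g : quotAlg k r →ₐ[k] A}
    (h : ∀ i, f (gen k r i) = g (gen k r i)) : f = g :=
  RingQuot.ringQuot_ext' k f g (FreeAlgebra.hom_ext (funext h))

lemma gradedIso_of_map_gen (φ : quotAlg k r ≃ₐ[k] quotAlg k r') (σ : Equiv.Perm (Fin 3))
    (h : ∀ i, φ (gen k r i) = gen k r' (σ i)) : GradedIso k r r' := by
  refine ⟨φ, ?_⟩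
  rw [genSpan, genSpan, Submodule.map_span, ← Set.range_comp,
    ← σ.surjective.range_comp (gen k r')]
  exact congrArg (Submodule.span k ∘ Set.range) (funext h)

variable (r) in
abbrev genComb : (Fin 3 → k) →ₗ[k] quotAlg k r := Fintype.linearCombination k (gen k r)

lemma genComb_apply (a : Fin 3 → k) :
    genComb r a = a 0 • gen k r 0 + a 1 • gen k r 1 + a 2 • gen k r 2 := by
  rw [Fintype.linearCombination_apply, Fin.sum_univ_three]

lemma det_ne_zero_of_map_gen (hr : LinearIndependent k (gen k r))
    (φ : quotAlg k r ≃ₐ[k] quotAlg k r') (A : Matrix (Fin 3) (Fin 3) k)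
    (hA : ∀ i, φ (gen k r i) = genComb r' (A i)) : A.det ≠ 0 := by
  have hφ := hr.map' φ.toLinearMap (LinearMap.ker_eq_bot_of_injective φ.injective)
  rw [show φ.toLinearMap ∘ gen k r = genComb r' ∘ A.row from funext hA] at hφ
  rw [← isUnit_iff_ne_zero, ← Matrix.isUnit_iff_isUnit_det,
    ← Matrix.linearIndependent_rows_iff_isUnit]
  exact hφ.of_comp

end Generators

variable (d D : k)

abbrev S : Type := quotAlg k (SdDrel k d D)

lemma gen_zero_mul_gen_one :
    gen k (SdDrel k d D) 0 * gen k (SdDrel k d D) 1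
      = gen k (SdDrel k d D) 1 * gen k (SdDrel k d D) 0 := by
  simpa [X, Y, gen, sub_eq_zero] using
    mkAlgHom_eq_zero_of_mem (r := SdDrel k d D) (Set.mem_insert _ _)

lemma gen_two_mul_gen_zero :
    gen k (SdDrel k d D) 2 * gen k (SdDrel k d D) 0
      = d • (gen k (SdDrel k d D) 0 * gen k (SdDrel k d D) 2) := by
  simpa [X, Z, gen, sub_eq_zero] using
    mkAlgHom_eq_zero_of_mem (r := SdDrel k d D)
      (Set.mem_insert_of_mem _ (Set.mem_insert _ _))

lemma gen_two_mul_gen_one :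
    gen k (SdDrel k d D) 2 * gen k (SdDrel k d D) 1
      = D • (gen k (SdDrel k d D) 1 * gen k (SdDrel k d D) 2) := by
  simpa [Y, Z, gen, sub_eq_zero] using
    mkAlgHom_eq_zero_of_mem (r := SdDrel k d D)
      (Set.mem_insert_of_mem _ (Set.mem_insert_of_mem _ rfl))

section Lift

variable {d D} {A : Type} [Ring A] [Algebra k A] (u v w : A)
  (huv : u * v = v * u) (hwu : w * u = d • (u * w)) (hwv : w * v = D • (v * w))

def lift : S d D →ₐ[k] A :=
  RingQuot.liftAlgHom k ⟨FreeAlgebra.lift k ![u, v, w], by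
    rintro _ _ ⟨h | h | h, rfl⟩ <;> subst h <;> simp [X, Y, Z, *]⟩

lemma lift_gen (i : Fin 3) : lift u v w huv hwu hwv (gen k (SdDrel k d D) i) = ![u, v, w] i := by
  simp [lift, gen]

end Lift

section Representation

/- `S d D` acts on the normal monomials `x^i y^j z^l`, indexed by `(i, j, l)`: `x` and `y` shift
the exponents and `z x^i y^j z^l = d^i D^j x^i y^j z^(l+1)`. -/
variable (k) in
abbrev M : Type := (ℕ × ℕ × ℕ) →₀ k

variable (k) in
def mulX : Module.End k (M k) := Finsupp.lmapDomain k k fun p => (p.1 + 1, p.2.1, p.2.2)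

variable (k) in
def mulY : Module.End k (M k) := Finsupp.lmapDomain k k fun p => (p.1, p.2.1 + 1, p.2.2)

def mulZ : Module.End k (M k) :=
  Finsupp.lsum k fun p => LinearMap.toSpanSingleton k (M k)
    (Finsupp.single (p.1, p.2.1, p.2.2 + 1) (d ^ p.1 * D ^ p.2.1))

@[simp] lemma mulX_single (p : ℕ × ℕ × ℕ) (c : k) :
    mulX k (Finsupp.single p c) = Finsupp.single (p.1 + 1, p.2.1, p.2.2) c := by
  simp [mulX]

@[simp] lemma mulY_single (p : ℕ × ℕ × ℕ) (c : k) :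
    mulY k (Finsupp.single p c) = Finsupp.single (p.1, p.2.1 + 1, p.2.2) c := by
  simp [mulY]

@[simp] lemma mulZ_single (p : ℕ × ℕ × ℕ) (c : k) :
    mulZ d D (Finsupp.single p c)
      = Finsupp.single (p.1, p.2.1, p.2.2 + 1) (d ^ p.1 * D ^ p.2.1 * c) := by
  simp only [mulZ, Finsupp.lsum_single, LinearMap.toSpanSingleton_apply, Finsupp.smul_single,
    smul_eq_mul, mul_comm c]

lemma mulX_mul_mulY : mulX k * mulY k = mulY k * mulX k :=
  Finsupp.lhom_ext fun p c => by simp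

lemma mulZ_mul_mulX : mulZ d D * mulX k = d • (mulX k * mulZ d D) :=
  Finsupp.lhom_ext fun p c => by
    simp only [Module.End.mul_apply, LinearMap.smul_apply, mulX_single, mulZ_single,
      Finsupp.smul_single, smul_eq_mul]
    ring_nf

lemma mulZ_mul_mulY : mulZ d D * mulY k = D • (mulY k * mulZ d D) :=
  Finsupp.lhom_ext fun p c => by
    simp only [Module.End.mul_apply, LinearMap.smul_apply, mulY_single, mulZ_single,
      Finsupp.smul_single, smul_eq_mul]
    ring_nf

def rep : S d D →ₐ[k] Module.End k (M k) :=
  lift (A := Module.End k (M k)) _ _ _ mulX_mul_mulY (mulZ_mul_mulX d D) (mulZ_mul_mulY d D)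

def ev : S d D →ₗ[k] M k :=
  LinearMap.applyₗ (Finsupp.single (0, 0, 0) 1) ∘ₗ (rep d D).toLinearMap

lemma ev_gen (i : Fin 3) :
    ev d D (gen k (SdDrel k d D) i) =
      Finsupp.single (![(1, 0, 0), (0, 1, 0), (0, 0, 1)] i) 1 := by
  fin_cases i <;> simp [ev, rep, lift_gen]

lemma linearIndependent_gen : LinearIndependent k (gen k (SdDrel k d D)) := by
  refine LinearIndependent.of_comp (ev d D) ?_
  have he : Function.Injective ![((1 : ℕ), (0 : ℕ), (0 : ℕ)), (0, 1, 0), (0, 0, 1)] := by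
    decide
  convert (Finsupp.linearIndependent_single_one k _).comp _ he
  exact funext (ev_gen d D)

lemma rep_genComb_single (a : Fin 3 → k) (p : ℕ × ℕ × ℕ) (c : k) :
    rep d D (genComb _ a) (Finsupp.single p c) =
      Finsupp.single (p.1 + 1, p.2.1, p.2.2) (a 0 * c)
      + Finsupp.single (p.1, p.2.1 + 1, p.2.2) (a 1 * c)
      + Finsupp.single (p.1, p.2.1, p.2.2 + 1) (a 2 * (d ^ p.1 * D ^ p.2.1 * c)) := by
  simp [rep, genComb_apply, lift_gen, -Finsupp.single_mul]

lemma ev_genComb_mul_genComb (a b : Fin 3 → k) :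
    ev d D (genComb _ a * genComb _ b) =
      Finsupp.single (2, 0, 0) (a 0 * b 0) + Finsupp.single (0, 2, 0) (a 1 * b 1)
      + Finsupp.single (0, 0, 2) (a 2 * b 2) + Finsupp.single (1, 1, 0) (a 0 * b 1 + a 1 * b 0)
      + Finsupp.single (1, 0, 1) (a 0 * b 2 + d * a 2 * b 0)
      + Finsupp.single (0, 1, 1) (a 1 * b 2 + D * a 2 * b 1) := by
  have h1 : ev d D (genComb _ b) =
      Finsupp.single (1, 0, 0) (b 0) + Finsupp.single (0, 1, 0) (b 1)
      + Finsupp.single (0, 0, 1) (b 2) := by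
    simpa [ev] using rep_genComb_single d D b (0, 0, 0) 1
  have h2 :
      ev d D (genComb _ a * genComb _ b) = rep d D (genComb _ a) (ev d D (genComb _ b)) := by
    simp [ev]
  rw [h2, h1]
  simp only [map_add, rep_genComb_single]
  ext p
  simp only [Finsupp.coe_add, Pi.add_apply, Finsupp.single_apply, zero_add, Nat.reduceAdd]
  split_ifs <;> ring

end Representation

section Coefficients

variable {d D} {q : k} {a c : Fin 3 → k}

lemma coeff_eqs_of_genComb_mul_eq_smul
    (h : genComb (SdDrel k d D) c * genComb _ a = q • (genComb _ a * genComb _ c)) :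
    c 0 * a 0 = q * (a 0 * c 0) ∧ c 1 * a 1 = q * (a 1 * c 1) ∧ c 2 * a 2 = q * (a 2 * c 2) ∧
      c 0 * a 1 + c 1 * a 0 = q * (a 0 * c 1 + a 1 * c 0) ∧
      c 0 * a 2 + d * c 2 * a 0 = q * (a 0 * c 2 + d * a 2 * c 0) ∧
      c 1 * a 2 + D * c 2 * a 1 = q * (a 1 * c 2 + D * a 2 * c 1) := by
  have h' := congrArg (ev d D) h
  rw [map_smul, ev_genComb_mul_genComb, ev_genComb_mul_genComb] at h'
  have coeff := fun p => DFunLike.congr_fun h' p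
  refine ⟨?_, ?_, ?_, ?_, ?_, ?_⟩
  · simpa [mul_add] using coeff (2, 0, 0)
  · simpa [mul_add] using coeff (0, 2, 0)
  · simpa [mul_add] using coeff (0, 0, 2)
  · simpa [mul_add] using coeff (1, 1, 0)
  · simpa [mul_add] using coeff (1, 0, 1)
  · simpa [mul_add] using coeff (0, 1, 1)

/- The hypotheses say that `(a₀ X + a₁ Y) * (c₀ X + c₁ Y) = 0` in `k[X, Y]`. -/
lemma eq_zero_or_eq_zero_of_linear_forms_mul {a₀ a₁ c₀ c₁ : k} (h₀₀ : a₀ * c₀ = 0)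
    (h₁₁ : a₁ * c₁ = 0) (h₀₁ : a₀ * c₁ + a₁ * c₀ = 0) :
    (a₀ = 0 ∧ a₁ = 0) ∨ (c₀ = 0 ∧ c₁ = 0) := by
  by_cases ha₀ : a₀ = 0
  · subst ha₀
    simp only [zero_mul, zero_add, mul_eq_zero] at h₀₁ h₁₁
    tauto
  · have hc₀ : c₀ = 0 := (mul_eq_zero.1 h₀₀).resolve_left ha₀
    subst hc₀
    simp only [mul_zero, add_zero, mul_eq_zero] at h₀₁
    exact Or.inr ⟨rfl, h₀₁.resolve_left ha₀⟩

lemma xy_coeffs_eq_zero_or_of_genComb_mul_eq_smul (hq : q ≠ 1)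
    (h : genComb (SdDrel k d D) c * genComb _ a = q • (genComb _ a * genComb _ c)) :
    (a 0 = 0 ∧ a 1 = 0) ∨ (c 0 = 0 ∧ c 1 = 0) := by
  obtain ⟨h₀₀, h₁₁, -, h₀₁, -, -⟩ := coeff_eqs_of_genComb_mul_eq_smul h
  have cancel : ∀ t : k, t = q * t → t = 0 := fun t ht =>
    (mul_eq_zero.1 (by linear_combination ht : (1 - q) * t = 0)).resolve_left
      (sub_ne_zero.2 hq.symm)
  exact eq_zero_or_eq_zero_of_linear_forms_mul (cancel _ (by linear_combination h₀₀))
    (cancel _ (by linear_combination h₁₁)) (cancel _ (by linear_combination h₀₁))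

lemma params_eq_of_genComb_mul_eq_smul (hq : q ≠ 1) (hc : c 2 ≠ 0)
    (h : genComb (SdDrel k d D) c * genComb _ a = q • (genComb _ a * genComb _ c)) :
    a 2 = 0 ∧ (a 0 ≠ 0 → d = q) ∧ (a 1 ≠ 0 → D = q) := by
  obtain ⟨-, -, h₂₂, -, h₀₂, h₁₂⟩ := coeff_eqs_of_genComb_mul_eq_smul h
  have ha : a 2 = 0 := by
    have : (1 - q) * c 2 * a 2 = 0 := by linear_combination h₂₂
    simpa [sub_eq_zero, hc, Ne.symm hq] using this
  refine ⟨ha, fun ha₀ => ?_, fun ha₁ => ?_⟩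
  · have : (d - q) * c 2 * a 0 = 0 := by rw [ha] at h₀₂; linear_combination h₀₂
    simpa [sub_eq_zero, hc, ha₀] using this
  · have : (D - q) * c 2 * a 1 = 0 := by rw [ha] at h₁₂; linear_combination h₁₂
    simpa [sub_eq_zero, hc, ha₁] using this

end Coefficients

def swap : S d D →ₐ[k] S D d :=
  lift (gen k _ 1) (gen k _ 0) (gen k _ 2) (gen_zero_mul_gen_one D d).symm
    (gen_two_mul_gen_one D d) (gen_two_mul_gen_zero D d)

lemma swap_gen (i : Fin 3) :
    swap d D (gen k _ i) = gen k (SdDrel k D d) (Equiv.swap 0 1 i) := by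
  fin_cases i <;> simp [swap, lift_gen, Equiv.swap_apply_of_ne_of_ne]

def swapEquiv : S d D ≃ₐ[k] S D d :=
  AlgEquiv.ofAlgHom (swap d D) (swap D d)
    (algHom_ext fun i => by simp [swap_gen]) (algHom_ext fun i => by simp [swap_gen])

lemma gradedIso_swap : GradedIso k (SdDrel k d D) (SdDrel k D d) :=
  gradedIso_of_map_gen (swapEquiv d D) (Equiv.swap 0 1) (swap_gen d D)

section Classification

variable {d D} {d' D' : k}

lemma params_eq_of_gradedIso (hd : d ≠ 1) (hD : D ≠ 1)
    (h : GradedIso k (SdDrel k d D) (SdDrel k d' D')) :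
    (d' = d ∧ D' = D) ∨ (d' = D ∧ D' = d) := by
  obtain ⟨φ, hφ⟩ := h
  have hmem (i : Fin 3) : φ (gen k _ i) ∈ genSpan k (SdDrel k d' D') :=
    hφ ▸ Submodule.mem_map_of_mem (Submodule.subset_span ⟨i, rfl⟩)
  choose A hA using fun i => (Submodule.mem_span_range_iff_exists_fun k).1 (hmem i)
  have hA' (i : Fin 3) : φ (gen k _ i) = genComb _ (A i) := (hA i).symm
  have hdet := det_ne_zero_of_map_gen (linearIndependent_gen d D) φ (Matrix.of A) hA'
  simp only [Matrix.det_fin_three, Matrix.of_apply] at hdet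
  have hx : genComb (SdDrel k d' D') (A 2) * genComb _ (A 0)
      = d • (genComb _ (A 0) * genComb _ (A 2)) := by
    rw [← hA', ← hA', ← map_mul, gen_two_mul_gen_zero, map_smul, map_mul]
  have hy : genComb (SdDrel k d' D') (A 2) * genComb _ (A 1)
      = D • (genComb _ (A 1) * genComb _ (A 2)) := by
    rw [← hA', ← hA', ← map_mul, gen_two_mul_gen_one, map_smul, map_mul]
  have hc : A 2 2 ≠ 0 := by
    intro hc
    have hcxy : ¬ (A 2 0 = 0 ∧ A 2 1 = 0) := fun ⟨h₀, h₁⟩ => hdet (by simp [h₀, h₁, hc])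
    obtain ⟨ha₀, ha₁⟩ := (xy_coeffs_eq_zero_or_of_genComb_mul_eq_smul hd hx).resolve_right hcxy
    obtain ⟨hb₀, hb₁⟩ := (xy_coeffs_eq_zero_or_of_genComb_mul_eq_smul hD hy).resolve_right hcxy
    exact hdet (by simp [ha₀, ha₁, hb₀, hb₁, hc])
  obtain ⟨ha₂, hda, hDa⟩ := params_eq_of_genComb_mul_eq_smul hd hc hx
  obtain ⟨hb₂, hdb, hDb⟩ := params_eq_of_genComb_mul_eq_smul hD hc hy
  have hab : A 0 0 * A 1 1 ≠ 0 ∨ A 0 1 * A 1 0 ≠ 0 := by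
    by_contra! h
    exact hdet (by rw [ha₂, hb₂]; linear_combination A 2 2 * h.1 - A 2 2 * h.2)
  rcases hab with h | h
  · exact Or.inl ⟨hda (left_ne_zero_of_mul h), hDb (right_ne_zero_of_mul h)⟩
  · exact Or.inr ⟨hdb (right_ne_zero_of_mul h), hDa (left_ne_zero_of_mul h)⟩

end Classification

end SdD

theorem stmt7_general (k : Type) [Field k]
    (d D d' D' : k) (hd : d ≠ 1) (hD : D ≠ 1) :
    GradedIso k (SdDrel k d D) (SdDrel k d' D') ↔
      (d' = d ∧ D' = D) ∨ (d' = D ∧ D' = d) := by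
  refine ⟨SdD.params_eq_of_gradedIso hd hD, ?_⟩
  rintro (⟨rfl, rfl⟩ | ⟨rfl, rfl⟩)
  · exact SdD.gradedIso_of_map_gen AlgEquiv.refl 1 fun _ => rfl
  · exact SdD.gradedIso_swap _ _

theorem stmt7 (k : Type) [Field k] [IsAlgClosed k] (hchar : ringChar k ≠ 2)
    (d D d' D' : k) (hd : d ≠ 1) (hD : D ≠ 1) (hd' : d' ≠ 1) (hD' : D' ≠ 1) :
    GradedIso k (SdDrel k d D) (SdDrel k d' D') ↔
      (d' = d ∧ D' = D) ∨ (d' = D ∧ D' = d) :=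
  stmt7_general k d D d' D' hd hD
end
end

section
/- Let k be an algebraically closed field with char k ≠ 2. Let γ, γ' ∈ k and ε, ε' ∈ {0,1}. Then there is a graded isomorphism W(γ,ε) ≅ W(γ',ε') if and only if ε = ε' and γ = γ'. -/
noncomputable section

/-- Relations of `W(γ,ε) = k⟨x,y,z⟩/⟨xy − yx, zx − xz + ε·x² + γ·xy, zy − yz + ε·xy + (1+γ)·y²⟩`. -/
noncomputable def Wrel (k : Type) [Field k] (γ ε : k) : Set (F3 k) :=
  {X k * Y k - Y k * X k,
   Z k * X k - X k * Z k + ε • X k ^ 2 + γ • (X k * Y k),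
   Z k * Y k - Y k * Z k + ε • (X k * Y k) + (1 + γ) • Y k ^ 2}

/-!
A graded isomorphism `W(γ, ε) → W(γ', ε')` is a matrix `g ∈ GL₃(k)` carrying the relations of the
source into the ideal of the target. This is tested in degree two through the action of the target
on `k[x, y, z]` in which `x, y` multiply and `z` acts as `z - D`, with `D = δx ∂ₓ + δy ∂_y`.

If `[z, x]` and `[z, y]` are independent in the target, then `⟨x, y⟩` is the only two-dimensional
commuting subspace of degree one, so `g` preserves it. The images of `x` and `y` are then
eigenvectors of the quadratic derivation `D`, whose only eigenlines are `x` and `y`; swapping them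
is impossible, and comparing eigenvalues gives `ε = ε'` and `γ = γ'`. By symmetry only `W(0, 0)` and
`W(-1, 0)` are left, and they differ: `[z, y] = -y²` is a square in the first, while in the second
no nonzero square of a degree-one element is a commutator.
-/

abbrev WAlg (k : Type) [Field k] (γ ε : k) : Type := quotAlg k (Wrel k γ ε)

section Forms
variable {k A : Type} [Field k] [CommRing A] [Algebra k A]

/-- `δx` and `δy` are `-[z, x]` and `-[z, y]` in `W(γ, ε)`. -/
def δx (γ ε : k) (v : Fin 3 → A) : A := ε • v 0 ^ 2 + γ • (v 0 * v 1)

def δy (γ ε : k) (v : Fin 3 → A) : A := ε • (v 0 * v 1) + (1 + γ) • v 1 ^ 2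

end Forms

section Representation
variable {k : Type} [Field k]

local notation "P" => MvPolynomial (Fin 3) k
local notation "𝐗" => (MvPolynomial.X : Fin 3 → P)

def oreDeriv (γ ε : k) : Derivation k P P :=
  δx γ ε 𝐗 • MvPolynomial.pderiv 0 + δy γ ε 𝐗 • MvPolynomial.pderiv 1

/-- `W(γ, ε)` is the Ore extension `k[x, y][z; -oreDeriv]`, and this is its natural module. -/
def genAct (γ ε : k) : Fin 3 → Module.End k P :=
  ![LinearMap.mulLeft k (MvPolynomial.X 0), LinearMap.mulLeft k (MvPolynomial.X 1),
    LinearMap.mulLeft k (MvPolynomial.X 2) - (oreDeriv γ ε).toLinearMap]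

lemma lift_genAct_eq_zero {γ ε : k} {r : F3 k} (hr : r ∈ Wrel k γ ε) :
    FreeAlgebra.lift k (genAct γ ε) r = 0 := by
  simp only [Wrel, Set.mem_insert_iff, Set.mem_singleton_iff] at hr
  rcases hr with rfl | rfl | rfl <;> refine LinearMap.ext fun p => ?_ <;>
    simp [X, Y, Z, genAct, pow_two, Module.End.mul_apply, Derivation.leibniz, oreDeriv,
      MvPolynomial.pderiv_X, δx, δy, MvPolynomial.smul_eq_C_mul] <;> ring

def polyRep (γ ε : k) : WAlg k γ ε →ₐ[k] Module.End k P :=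
  RingQuot.liftAlgHom k ⟨FreeAlgebra.lift k (genAct γ ε), by
    rintro r _ ⟨hr, rfl⟩
    rw [map_zero, lift_genAct_eq_zero hr]⟩

lemma polyRep_gen (γ ε : k) (i : Fin 3) : polyRep γ ε (gen k (Wrel k γ ε) i) = genAct γ ε i := by
  rw [gen, polyRep, RingQuot.liftAlgHom_mkAlgHom_apply, FreeAlgebra.lift_ι_apply]

variable (γ ε : k)

def linGen : (Fin 3 → k) →ₗ[k] WAlg k γ ε := Fintype.linearCombination k (gen k (Wrel k γ ε))

def symbol (v : Fin 3 → k) : WAlg k γ ε →ₗ[k] k :=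
  (MvPolynomial.aeval v).toLinearMap ∘ₗ LinearMap.applyₗ 1 ∘ₗ (polyRep γ ε).toLinearMap

def quadSymbol (a b v : Fin 3 → k) : k :=
  (a ⬝ᵥ v) * (b ⬝ᵥ v) - a 2 * (b 0 * δx γ ε v + b 1 * δy γ ε v)

lemma polyRep_linGen (a : Fin 3 → k) (p : P) :
    polyRep γ ε (linGen γ ε a) p = (∑ i, a i • 𝐗 i) * p - a 2 • oreDeriv γ ε p := by
  simp [linGen, Fintype.linearCombination_apply, Fin.sum_univ_three, polyRep_gen, genAct]
  simp only [add_mul, smul_mul_assoc, smul_sub]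
  abel

lemma symbol_linGen (a v : Fin 3 → k) : symbol γ ε v (linGen γ ε a) = a ⬝ᵥ v := by
  simp [symbol, polyRep_linGen, dotProduct, Fin.sum_univ_three]

lemma symbol_linGen_mul_linGen (a b v : Fin 3 → k) :
    symbol γ ε v (linGen γ ε a * linGen γ ε b) = quadSymbol γ ε a b v := by
  simp [symbol, polyRep_linGen, quadSymbol, dotProduct, Fin.sum_univ_three, oreDeriv,
    MvPolynomial.pderiv_X, δx, δy]
  ring

lemma quadSymbol_sub_quadSymbol (a b v : Fin 3 → k) :
    quadSymbol γ ε a b v - quadSymbol γ ε b a v =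
      -((a 2 * b 0 - a 0 * b 2) * δx γ ε v + (a 2 * b 1 - a 1 * b 2) * δy γ ε v) := by
  unfold quadSymbol
  ring

lemma linGen_injective : Function.Injective (linGen γ ε) := by
  intro a b h
  funext i
  simpa [symbol_linGen, dotProduct_single] using congrArg (symbol γ ε (Pi.single i 1)) h

end Representation

/-- Row `i` of `g` is the image of the `i`-th generator under a graded isomorphism
`W(γ, ε) → W(γ', ε')`; the fields `relᵢ` say that the defining relations are mapped to zero, as seen
by `symbol`. -/
structure IsGradedIsoMatrix {k : Type} [Field k] (γ ε γ' ε' : k) (g : Matrix (Fin 3) (Fin 3) k) :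
    Prop where
  det_ne_zero : g.det ≠ 0
  rel₁ : ∀ v, quadSymbol γ' ε' (g 0) (g 1) v - quadSymbol γ' ε' (g 1) (g 0) v = 0
  rel₂ : ∀ v, quadSymbol γ' ε' (g 2) (g 0) v - quadSymbol γ' ε' (g 0) (g 2) v
    + ε * quadSymbol γ' ε' (g 0) (g 0) v + γ * quadSymbol γ' ε' (g 0) (g 1) v = 0
  rel₃ : ∀ v, quadSymbol γ' ε' (g 2) (g 1) v - quadSymbol γ' ε' (g 1) (g 2) v
    + ε * quadSymbol γ' ε' (g 0) (g 1) v + (1 + γ) * quadSymbol γ' ε' (g 1) (g 1) v = 0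

section GradedIso
open Matrix
variable {k : Type} [Field k] {γ ε γ' ε' γ'' ε'' : k}

lemma linGen_single (i : Fin 3) : linGen γ ε (Pi.single i 1) = gen k (Wrel k γ ε) i := by
  classical
  rw [linGen, Fintype.linearCombination_apply_single, one_smul]

lemma map_linGen {φ : WAlg k γ ε →ₐ[k] WAlg k γ' ε'} {g : Matrix (Fin 3) (Fin 3) k}
    (hg : ∀ i, φ (gen k _ i) = linGen γ' ε' (g i)) (a : Fin 3 → k) :
    φ (linGen γ ε a) = linGen γ' ε' (a ᵥ* g) := by
  simp only [Matrix.vecMul_eq_sum, map_sum, map_smul, ← hg]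
  simp only [linGen, Fintype.linearCombination_apply, map_sum, map_smul]

lemma exists_matrix_of_map_genSpan_le (φ : WAlg k γ ε →ₐ[k] WAlg k γ' ε')
    (hφ : Submodule.map φ.toLinearMap (genSpan k (Wrel k γ ε)) ≤ genSpan k (Wrel k γ' ε')) :
    ∃ g : Matrix (Fin 3) (Fin 3) k, ∀ i, φ (gen k _ i) = linGen γ' ε' (g i) := by
  have h : ∀ i, ∃ a, linGen γ' ε' a = φ (gen k _ i) := fun i => by
    rw [← LinearMap.mem_range, linGen, Fintype.range_linearCombination]
    exact hφ ⟨_, Submodule.subset_span ⟨i, rfl⟩, rfl⟩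
  choose g hg using h
  exact ⟨g, fun i => (hg i).symm⟩

lemma apply_apply_gen {φ : WAlg k γ ε →ₐ[k] WAlg k γ' ε'} {ψ : WAlg k γ' ε' →ₐ[k] WAlg k γ'' ε''}
    {g h : Matrix (Fin 3) (Fin 3) k} (hg : ∀ i, φ (gen k _ i) = linGen γ' ε' (g i))
    (hh : ∀ i, ψ (gen k _ i) = linGen γ'' ε'' (h i)) (i : Fin 3) :
    ψ (φ (gen k _ i)) = linGen γ'' ε'' ((g * h) i) := by
  rw [hg, map_linGen hh]
  rfl

lemma IsGradedIsoMatrix.of_algHom (φ : WAlg k γ ε →ₐ[k] WAlg k γ' ε')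
    {g : Matrix (Fin 3) (Fin 3) k} (hg : ∀ i, φ (gen k _ i) = linGen γ' ε' (g i))
    (hdet : g.det ≠ 0) :
    IsGradedIsoMatrix γ ε γ' ε' g := by
  have hrel : ∀ r ∈ Wrel k γ ε, ∀ v,
      symbol γ' ε' v (φ (RingQuot.mkAlgHom k (fun a b : F3 k => a ∈ Wrel k γ ε ∧ b = 0) r)) = 0 :=
    fun r hr v => by rw [RingQuot.mkAlgHom_rel k ⟨hr, rfl⟩, map_zero, map_zero, map_zero]
  have hgen : ∀ i, φ (RingQuot.mkAlgHom k (fun a b : F3 k => a ∈ Wrel k γ ε ∧ b = 0)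
      (FreeAlgebra.ι k i)) = linGen γ' ε' (g i) := hg
  refine ⟨hdet, fun v => ?_, fun v => ?_, fun v => ?_⟩
  · have h := hrel _ (Set.mem_insert _ _) v
    simp only [X, Y, map_sub, map_mul, hgen, symbol_linGen_mul_linGen] at h
    exact h
  · have h := hrel _ (Set.mem_insert_of_mem _ (Set.mem_insert _ _)) v
    simp only [X, Y, Z, pow_two, map_sub, map_add, map_mul, map_smul, hgen,
      symbol_linGen_mul_linGen, smul_eq_mul] at h
    exact h
  · have h := hrel _ (Set.mem_insert_of_mem _ (Set.mem_insert_of_mem _ rfl)) v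
    simp only [X, Y, Z, pow_two, map_sub, map_add, map_mul, map_smul, hgen,
      symbol_linGen_mul_linGen, smul_eq_mul] at h
    exact h

lemma GradedIso.symm {r₁ r₂ : Set (F3 k)} (h : GradedIso k r₁ r₂) : GradedIso k r₂ r₁ := by
  obtain ⟨φ, hφ⟩ := h
  exact ⟨φ.symm, (Submodule.map_symm_eq_iff φ.toLinearEquiv).mpr hφ⟩

lemma GradedIso.exists_isGradedIsoMatrix (h : GradedIso k (Wrel k γ ε) (Wrel k γ' ε')) :
    ∃ g, IsGradedIsoMatrix γ ε γ' ε' g := by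
  obtain ⟨φ, hφ⟩ := h
  have hφ' : Submodule.map φ.symm.toLinearMap (genSpan k (Wrel k γ' ε')) = genSpan k (Wrel k γ ε) :=
    (Submodule.map_symm_eq_iff φ.toLinearEquiv).mpr hφ
  obtain ⟨g, hg⟩ := exists_matrix_of_map_genSpan_le φ.toAlgHom hφ.le
  obtain ⟨h, hh⟩ := exists_matrix_of_map_genSpan_le φ.symm.toAlgHom hφ'.le
  have hgh : g * h = 1 := by
    funext i
    apply linGen_injective γ ε
    have h1 : (1 : Matrix (Fin 3) (Fin 3) k) i = Pi.single i 1 := by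
      funext j
      simp [Matrix.one_apply, Pi.single_apply, eq_comm]
    rw [← apply_apply_gen hg hh, h1, linGen_single]
    exact φ.symm_apply_apply _
  refine ⟨g, IsGradedIsoMatrix.of_algHom φ.toAlgHom hg fun h0 => ?_⟩
  simpa [h0] using congrArg Matrix.det hgh

end GradedIso

section Classification
variable {k : Type} [Field k] {γ ε γ' ε' : k} {g : Matrix (Fin 3) (Fin 3) k}

def IndependentCommutators (γ ε : k) : Prop := LinearIndependent k ![δx (A := k) γ ε, δy γ ε]

lemma eq_zero_of_not_independentCommutators (h : ¬ IndependentCommutators γ ε) :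
    ε = 0 ∧ (γ = 0 ∨ γ = -1) := by
  rw [IndependentCommutators, LinearIndependent.pair_iff] at h
  push Not at h
  obtain ⟨s, t, hst, hne⟩ := h
  have hx := congrFun hst ![1, 0, 0]
  have hy := congrFun hst ![0, 1, 0]
  have hxy := congrFun hst ![1, 1, 0]
  simp [δx, δy] at hx hy hxy
  have ht0 : t * (1 + γ) = 0 := by rcases hy with h | h <;> simp [h]
  by_cases hs : s = 0
  · have ht := hne hs
    have hγ : 1 + γ = 0 := hy.resolve_left ht
    have hε : t * ε = 0 := by linear_combination hxy - t * hγ - (ε + γ) * hs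
    exact ⟨(mul_eq_zero.mp hε).resolve_left ht, Or.inr (by linear_combination hγ)⟩
  · have hε : ε = 0 := hx.resolve_left hs
    have hγ : s * γ = 0 := by linear_combination hxy - ht0 - (s + t) * hε
    exact ⟨hε, Or.inl ((mul_eq_zero.mp hγ).resolve_left hs)⟩

lemma IsGradedIsoMatrix.maps_plane (hg : IsGradedIsoMatrix γ ε γ' ε' g)
    (hind : IndependentCommutators γ' ε') : g 0 2 = 0 ∧ g 1 2 = 0 := by
  obtain ⟨hp, hq⟩ := LinearIndependent.pair_iff.mp hind (g 0 2 * g 1 0 - g 0 0 * g 1 2)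
    (g 0 2 * g 1 1 - g 0 1 * g 1 2) (funext fun v => by
      simp only [Pi.add_apply, Pi.smul_apply, smul_eq_mul, Pi.zero_apply]
      linear_combination -(hg.rel₁ v) + quadSymbol_sub_quadSymbol γ' ε' (g 0) (g 1) v)
  have ha : g 0 2 * g.det = 0 := by
    rw [Matrix.det_fin_three]
    linear_combination (g 0 2 * g 2 1 - g 0 1 * g 2 2) * hp + (g 0 0 * g 2 2 - g 0 2 * g 2 0) * hq
  have hb : g 1 2 * g.det = 0 := by
    rw [Matrix.det_fin_three]
    linear_combination (g 1 2 * g 2 1 - g 1 1 * g 2 2) * hp + (g 1 0 * g 2 2 - g 1 2 * g 2 0) * hq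
  exact ⟨(mul_eq_zero.mp ha).resolve_right hg.det_ne_zero,
    (mul_eq_zero.mp hb).resolve_right hg.det_ne_zero⟩

lemma IsGradedIsoMatrix.eq_of_maps_plane (hg : IsGradedIsoMatrix γ ε γ' ε' g) (ha : g 0 2 = 0)
    (hb : g 1 2 = 0) (hε : ε ∈ ({0, 1} : Set k)) (hε' : ε' ∈ ({0, 1} : Set k)) :
    ε = ε' ∧ γ = γ' := by
  have hdet : g 2 2 * (g 0 0 * g 1 1 - g 0 1 * g 1 0) ≠ 0 := by
    convert hg.det_ne_zero using 1
    rw [Matrix.det_fin_three, ha, hb]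
    ring
  obtain ⟨hc, hd⟩ := mul_ne_zero_iff.mp hdet
  -- `g₂₂ • D'(ℓ) = ℓ • m` for the linear forms `ℓ` of rows `0` and `1`, with `D'` the derivation of
  -- the target and `m` linear
  have E₂ : ∀ x y, g 2 2 * (g 0 0 * (ε' * x ^ 2 + γ' * (x * y))
      + g 0 1 * (ε' * (x * y) + (1 + γ') * y ^ 2)) =
      (g 0 0 * x + g 0 1 * y) * (ε * (g 0 0 * x + g 0 1 * y) + γ * (g 1 0 * x + g 1 1 * y)) := by
    intro x y
    have h := hg.rel₂ ![x, y, 0]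
    simp [quadSymbol, δx, δy, dotProduct, Fin.sum_univ_three, ha, hb] at h
    linear_combination -h
  have E₃ : ∀ x y, g 2 2 * (g 1 0 * (ε' * x ^ 2 + γ' * (x * y))
      + g 1 1 * (ε' * (x * y) + (1 + γ') * y ^ 2)) =
      (g 1 0 * x + g 1 1 * y) * (ε * (g 0 0 * x + g 0 1 * y)
      + (1 + γ) * (g 1 0 * x + g 1 1 * y)) := by
    intro x y
    have h := hg.rel₃ ![x, y, 0]
    simp [quadSymbol, δx, δy, dotProduct, Fin.sum_univ_three, ha, hb] at h
    linear_combination -h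
  -- so each `ℓ` is an eigenvector of `D'`, whose only eigenlines are `x` and `y`: evaluate where
  -- `ℓ` vanishes
  have ha01 : g 0 0 * g 0 1 = 0 := by
    have h : g 2 2 * (g 0 0 ^ 2 * g 0 1) = 0 := by linear_combination E₂ (g 0 1) (-g 0 0)
    exact mul_self_eq_zero.mp
      (by linear_combination g 0 1 * (mul_eq_zero.mp h).resolve_left hc)
  have hb01 : g 1 0 * g 1 1 = 0 := by
    have h : g 2 2 * (g 1 0 ^ 2 * g 1 1) = 0 := by linear_combination E₃ (g 1 1) (-g 1 0)
    exact mul_self_eq_zero.mp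
      (by linear_combination g 1 1 * (mul_eq_zero.mp h).resolve_left hc)
  -- the swap `ℓ₀ ∝ y`, `ℓ₁ ∝ x` would force `γ • ℓ₁ = (1 + γ) • ℓ₁`
  have ha0 : g 0 0 ≠ 0 := by
    intro ha0
    have ha1 : g 0 1 ≠ 0 := fun ha1 => hd (by simp [ha0, ha1])
    have hb0 : g 1 0 ≠ 0 := fun hb0 => hd (by simp [ha0, hb0])
    have hb1 : g 1 1 = 0 := (mul_eq_zero.mp hb01).resolve_left hb0
    rw [ha0, hb1] at E₂ E₃
    have h₁ : g 0 1 * (g 2 2 * ε' - γ * g 1 0) = 0 := by linear_combination E₂ 1 1 - E₂ 0 1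
    have h₂ : g 1 0 * (g 2 2 * ε' - (1 + γ) * g 1 0) = 0 := by linear_combination E₃ 1 0
    apply hb0
    linear_combination (mul_eq_zero.mp h₁).resolve_left ha1 - (mul_eq_zero.mp h₂).resolve_left hb0
  have ha1 : g 0 1 = 0 := (mul_eq_zero.mp ha01).resolve_left ha0
  have hb1 : g 1 1 ≠ 0 := fun hb1 => hd (by simp [ha1, hb1])
  have hb0 : g 1 0 = 0 := (mul_eq_zero.mp hb01).resolve_right hb1
  rw [ha1, hb0] at E₂ E₃
  have hε₀ : g 2 2 * ε' = ε * g 0 0 := mul_left_cancel₀ ha0 (by linear_combination E₂ 1 0)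
  have hγ₀ : g 2 2 * γ' = γ * g 1 1 := mul_left_cancel₀ ha0 (by linear_combination E₂ 1 1 - E₂ 1 0)
  have hγ₁ : g 2 2 * (1 + γ') = (1 + γ) * g 1 1 :=
    mul_left_cancel₀ hb1 (by linear_combination E₃ 0 1)
  have hcb : g 2 2 = g 1 1 := by linear_combination hγ₁ - hγ₀
  refine ⟨?_, mul_left_cancel₀ hc (by linear_combination -hγ₀ + γ * hcb)⟩
  rcases hε with rfl | rfl <;> rcases hε' with rfl | rfl
  · rfl
  · exact absurd (by simpa using hε₀) hc
  · exact absurd (by simpa using hε₀.symm) ha0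
  · rfl

lemma IsGradedIsoMatrix.eq_of_independentCommutators (hg : IsGradedIsoMatrix γ ε γ' ε' g)
    (hind : IndependentCommutators γ' ε') (hε : ε ∈ ({0, 1} : Set k))
    (hε' : ε' ∈ ({0, 1} : Set k)) : ε = ε' ∧ γ = γ' :=
  hg.eq_of_maps_plane (hg.maps_plane hind).1 (hg.maps_plane hind).2 hε hε'

/-- In `W(0, 0)` the element `[z, y] = -y²` is a square, but in `W(-1, 0)` no nonzero square of a
degree-one element is a commutator. -/
lemma not_isGradedIsoMatrix_zero_neg_one : ¬ IsGradedIsoMatrix 0 0 (-1) 0 g := by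
  intro hg
  have hrow : ∀ i, g 1 i = 0 := by
    intro i
    have h := hg.rel₃ (Pi.single i 1)
    fin_cases i <;> simp [quadSymbol, δx, δy, dotProduct, Fin.sum_univ_three] at h ⊢ <;>
      exact mul_self_eq_zero.mp (by linear_combination h)
  apply hg.det_ne_zero
  simp [Matrix.det_fin_three, hrow]

end Classification

theorem stmt10_general (k : Type) [Field k]
    (γ γ' ε ε' : k) (hε : ε ∈ ({0, 1} : Set k)) (hε' : ε' ∈ ({0, 1} : Set k)) :
    GradedIso k (Wrel k γ ε) (Wrel k γ' ε') ↔ ε = ε' ∧ γ = γ' := by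
  refine ⟨fun h => ?_, ?_⟩
  · obtain ⟨g, hg⟩ := h.exists_isGradedIsoMatrix
    obtain ⟨g', hg'⟩ := h.symm.exists_isGradedIsoMatrix
    by_cases hind' : IndependentCommutators γ' ε'
    · exact hg.eq_of_independentCommutators hind' hε hε'
    by_cases hind : IndependentCommutators γ ε
    · obtain ⟨h₁, h₂⟩ := hg'.eq_of_independentCommutators hind hε' hε
      exact ⟨h₁.symm, h₂.symm⟩
    obtain ⟨rfl, hγ⟩ := eq_zero_of_not_independentCommutators hind
    obtain ⟨rfl, hγ'⟩ := eq_zero_of_not_independentCommutators hind'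
    refine ⟨rfl, ?_⟩
    rcases hγ with rfl | rfl <;> rcases hγ' with rfl | rfl
    · rfl
    · exact absurd hg not_isGradedIsoMatrix_zero_neg_one
    · exact absurd hg' not_isGradedIsoMatrix_zero_neg_one
    · rfl
  · rintro ⟨rfl, rfl⟩
    exact ⟨AlgEquiv.refl, Submodule.map_id _⟩

theorem stmt10 (k : Type) [Field k] [IsAlgClosed k] (hchar : ringChar k ≠ 2)
    (γ γ' ε ε' : k) (hε : ε ∈ ({0, 1} : Set k)) (hε' : ε' ∈ ({0, 1} : Set k)) :
    GradedIso k (Wrel k γ ε) (Wrel k γ' ε') ↔ ε = ε' ∧ γ = γ' :=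
  stmt10_general k γ γ' ε ε' hε hε'
end
end

section
/- Let k be an algebraically closed field with char k ≠ 2, and let d, d' ∈ k with d ≠ 1 and d' ≠ 1. Then there is a graded isomorphism W(d) ≅ W(d') if and only if d = d'. -/
noncomputable section

/-- Relations of `W(d) = k⟨x,y,z⟩/⟨xy − yx, zx − d·xz − yz, zy − d·yz⟩`. -/
noncomputable def Wdrel (k : Type) [Field k] (d : k) : Set (F3 k) :=
  {X k * Y k - Y k * X k,
   Z k * X k - d • (X k * Z k) - Y k * Z k,
   Z k * Y k - d • (Y k * Z k)}

/-!
`W(d')` is the Ore extension `k[x,y][z; σ]` with `σ x = d' x + y`, `σ y = d' y`, so it acts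
on functions `k³ → k`: `x`, `y` multiply by the coordinates `w₀`, `w₁`, and `z` sends `f`
to `w ↦ w₂ f(τ w)`, where `τ` is the substitution dual to `σ`. Applying an element to `1`
and evaluating at points turns identities in degree `≤ 2` into polynomial identities in
the coefficients.

A graded isomorphism sends `x, y, z` to linear forms `p, q, r` of `W(d')` with invertible
coefficient matrix satisfying `pq = qp` and `rq = d·qr`. Since `d' ≠ 1`, `pq = qp` makes
the `2 × 2` minors of `(p; q)` involving the `z`-column vanish, so the determinant is
`(p₀q₁ - p₁q₀) r₂`. Then the `w₂²`-term of `rq = d·qr` gives `q₂ = 0` (as `d ≠ 1`), and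
the remaining `w₂`-terms say `σ q = d q`; but on `span(x, y)` the map `σ` is a Jordan
block with the single eigenvalue `d'`.
-/

open Matrix

variable {k : Type} [Field k]

theorem Matrix.det_ne_zero_of_injective_of_linearIndependent {ι V W : Type*} [Fintype ι]
    [DecidableEq ι] [AddCommGroup V] [Module k V] [AddCommGroup W] [Module k W]
    {b : ι → V} {b' : ι → W} (hb : LinearIndependent k b) {f : V →ₗ[k] W}
    (hf : Function.Injective f) {M : Matrix ι ι k} (hM : ∀ i, f (b i) = ∑ j, M i j • b' j) :
    M.det ≠ 0 := by
  intro hdet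
  obtain ⟨c, hc, hcM⟩ := exists_vecMul_eq_zero_iff.mpr hdet
  refine hc (funext (Fintype.linearIndependent_iff.mp hb c (hf ?_)))
  calc f (∑ i, c i • b i) = ∑ j, (c ᵥ* M) j • b' j := by
        simp only [map_sum, map_smul, hM, Finset.smul_sum, smul_smul, vecMul, dotProduct,
          Finset.sum_smul]
        exact Finset.sum_comm
    _ = f 0 := by simp [hcM]

theorem mkAlgHom_eq_zero_of_mem {rels : Set (F3 k)} {a : F3 k} (ha : a ∈ rels) :
    RingQuot.mkAlgHom k (fun a b : F3 k => a ∈ rels ∧ b = 0) a = 0 :=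
  RingQuot.mkAlgHom_rel k ⟨ha, rfl⟩ |>.trans (map_zero _)

def genComb (rels : Set (F3 k)) (c : Fin 3 → k) : quotAlg k rels := ∑ i, c i • gen k rels i

theorem gen_mul_comm (d : k) :
    gen k (Wdrel k d) 0 * gen k (Wdrel k d) 1 = gen k (Wdrel k d) 1 * gen k (Wdrel k d) 0 := by
  have := mkAlgHom_eq_zero_of_mem (k := k)
    (show X k * Y k - Y k * X k ∈ Wdrel k d by simp [Wdrel])
  simpa [sub_eq_zero, gen, X, Y] using this

theorem gen_skew_comm (d : k) :
    gen k (Wdrel k d) 2 * gen k (Wdrel k d) 1 =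
      d • (gen k (Wdrel k d) 1 * gen k (Wdrel k d) 2) := by
  have := mkAlgHom_eq_zero_of_mem (k := k)
    (show Z k * Y k - d • (Y k * Z k) ∈ Wdrel k d by simp [Wdrel])
  simpa [sub_eq_zero, gen, Y, Z] using this

def twist (d : k) (w : Fin 3 → k) : Fin 3 → k := ![d * w 0 + w 1, d * w 1, w 2]

def genAction (d : k) : Fin 3 → Module.End k ((Fin 3 → k) → k)
  | 0 => LinearMap.mulLeft k fun w => w 0
  | 1 => LinearMap.mulLeft k fun w => w 1
  | 2 => LinearMap.mulLeft k (fun w => w 2) ∘ₗ LinearMap.funLeft k k (twist d)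

theorem lift_genAction_eq_zero {d : k} {a : F3 k} (ha : a ∈ Wdrel k d) :
    FreeAlgebra.lift k (genAction d) a = 0 := by
  rcases ha with rfl | rfl | rfl <;> ext f w <;>
    simp only [X, Y, Z, map_sub, map_mul, map_smul, FreeAlgebra.lift_ι_apply, genAction, twist,
      LinearMap.sub_apply, LinearMap.smul_apply, Module.End.mul_apply, LinearMap.mulLeft_apply,
      LinearMap.coe_comp, Function.comp_apply, LinearMap.funLeft_apply, LinearMap.zero_apply,
      Pi.sub_apply, Pi.mul_apply, Pi.smul_apply, Pi.zero_apply, smul_eq_mul, cons_val_zero,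
      cons_val_one] <;>
    ring

def rep (d : k) : quotAlg k (Wdrel k d) →ₐ[k] Module.End k ((Fin 3 → k) → k) :=
  RingQuot.liftAlgHom k ⟨FreeAlgebra.lift k (genAction d), by
    rintro a b ⟨ha, rfl⟩
    rw [lift_genAction_eq_zero ha, map_zero]⟩

theorem rep_gen (d : k) (i : Fin 3) : rep d (gen k (Wdrel k d) i) = genAction d i := by
  simp [rep, gen]

theorem rep_genComb_apply (d : k) (c : Fin 3 → k) (f : (Fin 3 → k) → k) (w : Fin 3 → k) :
    rep d (genComb (Wdrel k d) c) f w =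
      (c 0 * w 0 + c 1 * w 1) * f w + c 2 * w 2 * f (twist d w) := by
  simp only [genComb, Fin.sum_univ_three, map_add, map_smul, rep_gen, genAction,
    LinearMap.add_apply, LinearMap.smul_apply, LinearMap.mulLeft_apply, LinearMap.coe_comp,
    Function.comp_apply, LinearMap.funLeft_apply, Pi.add_apply, Pi.smul_apply, Pi.mul_apply,
    smul_eq_mul]
  ring

theorem linearIndependent_gen_s12 (d : k) : LinearIndependent k (gen k (Wdrel k d)) := by
  refine Fintype.linearIndependent_iff.mpr fun c hc i => ?_
  have : rep d (genComb (Wdrel k d) c) 1 (Pi.single i 1) = 0 := by simp [genComb, hc]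
  rw [rep_genComb_apply] at this
  fin_cases i <;> simpa using this

theorem rep_genComb_mul_apply_one (d : k) (u v w : Fin 3 → k) :
    rep d (genComb (Wdrel k d) u * genComb (Wdrel k d) v) 1 w =
      (u 0 * w 0 + u 1 * w 1) * (v 0 * w 0 + v 1 * w 1 + v 2 * w 2)
        + u 2 * w 2 * (v 0 * (d * w 0 + w 1) + v 1 * (d * w 1) + v 2 * w 2) := by
  simp [rep_genComb_apply, twist]

theorem minors_eq_of_commute {d' : k} (hd' : d' ≠ 1) {p q : Fin 3 → k}
    (h : genComb (Wdrel k d') p * genComb (Wdrel k d') q =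
      genComb (Wdrel k d') q * genComb (Wdrel k d') p) :
    p 0 * q 2 = p 2 * q 0 ∧ p 1 * q 2 = p 2 * q 1 := by
  have e w := congrArg (fun a => rep d' a 1 w) h
  have e1 := e ![1, 0, 1]
  have e2 := e ![0, 1, 1]
  simp only [rep_genComb_mul_apply_one, cons_val_zero, cons_val_one, cons_val, mul_one,
    mul_zero, add_zero, zero_add] at e1 e2
  have hd'1 : d' - 1 ≠ 0 := sub_ne_zero.mpr hd'
  have h0 : p 0 * q 2 = p 2 * q 0 := by
    apply mul_left_cancel₀ hd'1
    linear_combination -e1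
  exact ⟨h0, mul_left_cancel₀ hd'1 (by linear_combination -e2 - h0)⟩

theorem eq_of_skew_commute {d d' : k} (hd : d ≠ 1) {q r : Fin 3 → k}
    (h : genComb (Wdrel k d') r * genComb (Wdrel k d') q =
      d • (genComb (Wdrel k d') q * genComb (Wdrel k d') r))
    (hr : r 2 ≠ 0) (hq : q 0 ≠ 0 ∨ q 1 ≠ 0) : d = d' := by
  have e w := congrArg (fun a => rep d' a 1 w) h
  simp only [map_smul, LinearMap.smul_apply, Pi.smul_apply, smul_eq_mul,
    rep_genComb_mul_apply_one] at e
  have ez := e ![0, 0, 1]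
  have ex := e ![1, 0, 0]
  have exz := e ![1, 0, 1]
  have ey := e ![0, 1, 0]
  have eyz := e ![0, 1, 1]
  simp only [cons_val_zero, cons_val_one, cons_val, mul_one, mul_zero, zero_mul, add_zero,
    zero_add] at ez ex exz ey eyz
  have hq2 : q 2 = 0 := by
    have : (1 - d) * r 2 * q 2 = 0 := by linear_combination ez
    simpa [sub_ne_zero.mpr (Ne.symm hd), hr] using this
  rw [hq2] at exz eyz
  by_contra hne
  have hdd' : d' - d ≠ 0 := sub_ne_zero.mpr (Ne.symm hne)
  have hq0 : q 0 = 0 := by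
    have : (d' - d) * r 2 * q 0 = 0 := by linear_combination exz - ex
    simpa [hdd', hr] using this
  have hq1 : q 1 = 0 := by
    have : (d' - d) * r 2 * q 1 = 0 := by linear_combination eyz - ey - r 2 * hq0
    simpa [hdd', hr] using this
  exact hq.elim (· hq0) (· hq1)

theorem eq_of_genComb_relations {d d' : k} (hd : d ≠ 1) (hd' : d' ≠ 1)
    {M : Matrix (Fin 3) (Fin 3) k} (hdet : M.det ≠ 0)
    (hcomm : genComb (Wdrel k d') (M 0) * genComb (Wdrel k d') (M 1) =
      genComb (Wdrel k d') (M 1) * genComb (Wdrel k d') (M 0))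
    (hskew : genComb (Wdrel k d') (M 2) * genComb (Wdrel k d') (M 1) =
      d • (genComb (Wdrel k d') (M 1) * genComb (Wdrel k d') (M 2))) :
    d = d' := by
  obtain ⟨m0, m1⟩ := minors_eq_of_commute hd' hcomm
  have hdet' : (M 0 0 * M 1 1 - M 0 1 * M 1 0) * M 2 2 ≠ 0 := by
    convert hdet using 1
    rw [det_fin_three]
    linear_combination M 2 1 * m0 - M 2 0 * m1
  obtain ⟨hD, hr⟩ := mul_ne_zero_iff.mp hdet'
  refine eq_of_skew_commute hd hskew hr ?_
  by_contra! h
  exact hD (by rw [h.1, h.2]; ring)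

theorem stmt12_general (k : Type) [Field k] (d d' : k) (hd : d ≠ 1) (hd' : d' ≠ 1) :
    GradedIso k (Wdrel k d) (Wdrel k d') ↔ d = d' := by
  refine ⟨fun ⟨φ, hφ⟩ => ?_, ?_⟩
  · have hgen i : φ (gen k (Wdrel k d) i) ∈ genSpan k (Wdrel k d') :=
      hφ ▸ Submodule.mem_map_of_mem (Submodule.subset_span ⟨i, rfl⟩)
    choose M hM using fun i => (Submodule.mem_span_range_iff_exists_fun k).mp (hgen i)
    have hφgen i : φ (gen k (Wdrel k d) i) = genComb (Wdrel k d') (M i) := (hM i).symm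
    have hdet : Matrix.det M ≠ 0 :=
      det_ne_zero_of_injective_of_linearIndependent (linearIndependent_gen_s12 d)
        (f := φ.toLinearMap) φ.injective hφgen
    refine eq_of_genComb_relations hd hd' hdet ?_ ?_
    · simpa only [map_mul, hφgen] using congrArg φ (gen_mul_comm d)
    · simpa only [map_mul, map_smul, hφgen] using congrArg φ (gen_skew_comm d)
  · rintro rfl
    exact ⟨AlgEquiv.refl, Submodule.map_id _⟩

theorem stmt12 (k : Type) [Field k] [IsAlgClosed k] (hchar : ringChar k ≠ 2)
    (d d' : k) (hd : d ≠ 1) (hd' : d' ≠ 1) :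
    GradedIso k (Wdrel k d) (Wdrel k d') ↔ d = d' :=
  stmt12_general k d d' hd hd'
end
end

section
/- Let k be an algebraically closed field with char k ≠ 2, and let a, b, c ∈ k with c ≠ 0, not both a = 0 and b = 0, and not a³ = b³ = c³. Then there do not exist nonzero triples (x₀,y₀,z₀) ∈ k³ and (x₁,y₁,z₁) ∈ k³ satisfying all six equations: a·x₀x₁ = c·y₀z₁, b·x₀x₁ = c·z₀y₁, a·y₀y₁ = c·z₀x₁, b·y₀y₁ = c·x₀z₁, a·z₀z₁ = c·x₀y₁, and b·z₀z₁ = c·y₀x₁. -/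
private lemma aux13 {k : Type} [Field k] (a b c x₀ y₀ z₀ x₁ y₁ z₁ : k)
    (hc : c ≠ 0) (hab : ¬ (a = 0 ∧ b = 0))
    (h0 : ¬ (x₀ = 0 ∧ y₀ = 0 ∧ z₀ = 0)) (h1 : ¬ (x₁ = 0 ∧ y₁ = 0 ∧ z₁ = 0))
    (e1 : a * (x₀ * x₁) = c * (y₀ * z₁))
    (e2 : b * (x₀ * x₁) = c * (z₀ * y₁))
    (e3 : a * (y₀ * y₁) = c * (z₀ * x₁))
    (e4 : b * (y₀ * y₁) = c * (x₀ * z₁))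
    (e5 : a * (z₀ * z₁) = c * (x₀ * y₁))
    (e6 : b * (z₀ * z₁) = c * (y₀ * x₁))
    (hx : x₀ = 0) : False := by
  subst hx
  have h15 : y₀ * z₁ = 0 := by
    have : c * (y₀ * z₁) = 0 := by rw [← e1]; ring
    exact (mul_eq_zero.mp this).resolve_left hc
  rcases mul_eq_zero.mp h15 with hy | hz
  · -- y₀ = 0, hence z₀ ≠ 0
    subst hy
    have hz0 : z₀ ≠ 0 := fun h => h0 ⟨rfl, rfl, h⟩
    have hy1 : y₁ = 0 := by
      have : c * (z₀ * y₁) = 0 := by rw [← e2]; ring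
      have := (mul_eq_zero.mp this).resolve_left hc
      exact (mul_eq_zero.mp this).resolve_left hz0
    have hx1 : x₁ = 0 := by
      have : c * (z₀ * x₁) = 0 := by rw [← e3]; ring
      have := (mul_eq_zero.mp this).resolve_left hc
      exact (mul_eq_zero.mp this).resolve_left hz0
    have hz1 : z₁ ≠ 0 := fun h => h1 ⟨hx1, hy1, h⟩
    have ha : a = 0 := by
      have : a * (z₀ * z₁) = 0 := by rw [e5, hy1]; ring
      exact ((mul_eq_zero.mp this).resolve_right
        (fun h => (mul_eq_zero.mp h).elim hz0 hz1))
    have hb : b = 0 := by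
      have : b * (z₀ * z₁) = 0 := by rw [e6, hx1]; ring
      exact ((mul_eq_zero.mp this).resolve_right
        (fun h => (mul_eq_zero.mp h).elim hz0 hz1))
    exact hab ⟨ha, hb⟩
  · -- z₁ = 0
    subst hz
    by_cases hy0 : y₀ = 0
    · subst hy0
      have hz0 : z₀ ≠ 0 := fun h => h0 ⟨rfl, rfl, h⟩
      have hy1 : y₁ = 0 := by
        have : c * (z₀ * y₁) = 0 := by rw [← e2]; ring
        have := (mul_eq_zero.mp this).resolve_left hc
        exact (mul_eq_zero.mp this).resolve_left hz0
      have hx1 : x₁ = 0 := by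
        have : c * (z₀ * x₁) = 0 := by rw [← e3]; ring
        have := (mul_eq_zero.mp this).resolve_left hc
        exact (mul_eq_zero.mp this).resolve_left hz0
      exact h1 ⟨hx1, hy1, rfl⟩
    · have hx1 : x₁ = 0 := by
        have : c * (y₀ * x₁) = 0 := by rw [← e6]; ring
        have := (mul_eq_zero.mp this).resolve_left hc
        exact (mul_eq_zero.mp this).resolve_left hy0
      have hy1 : y₁ ≠ 0 := fun h => h1 ⟨hx1, h, rfl⟩
      have ha : a = 0 := by
        have : a * (y₀ * y₁) = 0 := by rw [e3, hx1]; ring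
        exact ((mul_eq_zero.mp this).resolve_right
          (fun h => (mul_eq_zero.mp h).elim hy0 hy1))
      have hb : b = 0 := by
        have : b * (y₀ * y₁) = 0 := by rw [e4]; ring
        exact ((mul_eq_zero.mp this).resolve_right
          (fun h => (mul_eq_zero.mp h).elim hy0 hy1))
      exact hab ⟨ha, hb⟩

theorem stmt13 (k : Type) [Field k] [IsAlgClosed k] (hchar : ringChar k ≠ 2)
    (a b c : k) (hc : c ≠ 0) (hab : ¬ (a = 0 ∧ b = 0))
    (hD : ¬ (a ^ 3 = b ^ 3 ∧ b ^ 3 = c ^ 3)) :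
    ¬ ∃ x₀ y₀ z₀ x₁ y₁ z₁ : k,
        (x₀, y₀, z₀) ≠ (0, 0, 0) ∧ (x₁, y₁, z₁) ≠ (0, 0, 0) ∧
        a * (x₀ * x₁) = c * (y₀ * z₁) ∧
        b * (x₀ * x₁) = c * (z₀ * y₁) ∧
        a * (y₀ * y₁) = c * (z₀ * x₁) ∧
        b * (y₀ * y₁) = c * (x₀ * z₁) ∧
        a * (z₀ * z₁) = c * (x₀ * y₁) ∧
        b * (z₀ * z₁) = c * (y₀ * x₁) := by
  rintro ⟨x₀, y₀, z₀, x₁, y₁, z₁, h0, h1, e1, e2, e3, e4, e5, e6⟩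
  have h0' : ¬ (x₀ = 0 ∧ y₀ = 0 ∧ z₀ = 0) := by
    intro ⟨hx, hy, hz⟩; exact h0 (by simp [hx, hy, hz])
  have h1' : ¬ (x₁ = 0 ∧ y₁ = 0 ∧ z₁ = 0) := by
    intro ⟨hx, hy, hz⟩; exact h1 (by simp [hx, hy, hz])
  have hab' : ¬ (b = 0 ∧ a = 0) := fun ⟨h1, h2⟩ => hab ⟨h2, h1⟩
  set P := x₀ * y₀ * z₀ * (x₁ * y₁ * z₁) with hP
  have hA : a ^ 3 * P = c ^ 3 * P := by
    rw [hP]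
    linear_combination (a * (y₀ * y₁) * (a * (z₀ * z₁))) * e1 +
      (c * (y₀ * z₁) * (a * (z₀ * z₁))) * e3 +
      (c * (y₀ * z₁) * (c * (z₀ * x₁))) * e5
  have hB : b ^ 3 * P = c ^ 3 * P := by
    rw [hP]
    linear_combination (b * (y₀ * y₁) * (b * (z₀ * z₁))) * e2 +
      (c * (z₀ * y₁) * (b * (z₀ * z₁))) * e4 +
      (c * (z₀ * y₁) * (c * (x₀ * z₁))) * e6
  by_cases hPz : P = 0
  · rw [hP] at hPz
    rcases mul_eq_zero.mp hPz with h | h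
    · rcases mul_eq_zero.mp h with h | h
      · rcases mul_eq_zero.mp h with h | h
        · exact aux13 a b c x₀ y₀ z₀ x₁ y₁ z₁ hc hab h0' h1' e1 e2 e3 e4 e5 e6 h
        · exact aux13 a b c y₀ z₀ x₀ y₁ z₁ x₁ hc hab
            (fun ⟨p, q, r⟩ => h0' ⟨r, p, q⟩) (fun ⟨p, q, r⟩ => h1' ⟨r, p, q⟩)
            e3 e4 e5 e6 e1 e2 h
      · exact aux13 a b c z₀ x₀ y₀ z₁ x₁ y₁ hc hab
          (fun ⟨p, q, r⟩ => h0' ⟨q, r, p⟩) (fun ⟨p, q, r⟩ => h1' ⟨q, r, p⟩)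
          e5 e6 e1 e2 e3 e4 h
    · rcases mul_eq_zero.mp h with h | h
      · rcases mul_eq_zero.mp h with h | h
        · exact aux13 b a c x₁ y₁ z₁ x₀ y₀ z₀ hc hab' h1' h0'
            (by linear_combination e2) (by linear_combination e1)
            (by linear_combination e4) (by linear_combination e3)
            (by linear_combination e6) (by linear_combination e5) h
        · exact aux13 b a c y₁ z₁ x₁ y₀ z₀ x₀ hc hab'
            (fun ⟨p, q, r⟩ => h1' ⟨r, p, q⟩) (fun ⟨p, q, r⟩ => h0' ⟨r, p, q⟩)
            (by linear_combination e4) (by linear_combination e3)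
            (by linear_combination e6) (by linear_combination e5)
            (by linear_combination e2) (by linear_combination e1) h
      · exact aux13 b a c z₁ x₁ y₁ z₀ x₀ y₀ hc hab'
          (fun ⟨p, q, r⟩ => h1' ⟨q, r, p⟩) (fun ⟨p, q, r⟩ => h0' ⟨q, r, p⟩)
          (by linear_combination e6) (by linear_combination e5)
          (by linear_combination e2) (by linear_combination e1)
          (by linear_combination e4) (by linear_combination e3) h
  · have ha3 := mul_right_cancel₀ hPz hA
    have hb3 := mul_right_cancel₀ hPz hB
    exact hD ⟨ha3.trans hb3.symm, hb3⟩
end
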